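/- arXiv:1512.03463 — 8 statements merged into one kernel-verified Lean document; each statement's English description precedes it below -/
import Mathlib

section
/- If (A,B) is a symmetric pair of densely defined operators between Hilbert spaces H₁ and H₂, then A* (closure of A) is a densely defined self-adjoint operator on H₁ and B* (closure of B) is a densely defined self-adjoint operator on H₂. -/
open scoped RealInnerProductSpace

/-- Composition of two partially defined linear operators: `domain (S ∘ T)` consists of
those `x ∈ dom T` with `T x ∈ dom S`, and `(S ∘ T) x = S (T x)`. -/
noncomputable def LinearPMap.pcomp {𝕜 E F G : Type*} [RCLike 𝕜]
    [NormedAddCommGroup E] [NormedSpace 𝕜 E] [NormedAddCommGroup F] [NormedSpace 𝕜 F]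
    [NormedAddCommGroup G] [NormedSpace 𝕜 G]
    (S : F →ₗ.[𝕜] G) (T : E →ₗ.[𝕜] F) : E →ₗ.[𝕜] G where
  domain := (S.domain.comap T.toFun).map T.domain.subtype
  toFun :=
    S.toFun.comp <|
      (LinearMap.codRestrict S.domain (T.toFun.comp (S.domain.comap T.toFun).subtype)
        fun x => x.2).comp
        (Submodule.equivMapOfInjective T.domain.subtype (Submodule.injective_subtype _)
          (S.domain.comap T.toFun)).symm.toLinearMap

namespace LinearPMap
variable {𝕜 E F G : Type*} [RCLike 𝕜]
    [NormedAddCommGroup E] [NormedSpace 𝕜 E] [NormedAddCommGroup F] [NormedSpace 𝕜 F]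
    [NormedAddCommGroup G] [NormedSpace 𝕜 G]
    (S : F →ₗ.[𝕜] G) (T : E →ₗ.[𝕜] F)

lemma mem_pcomp_domain {x : E} :
    x ∈ (S.pcomp T).domain ↔ ∃ hx : x ∈ T.domain, T ⟨x, hx⟩ ∈ S.domain := by
  constructor
  · rintro ⟨z, hz, rfl⟩
    exact ⟨z.2, hz⟩
  · rintro ⟨hx, hTx⟩
    exact ⟨⟨x, hx⟩, hTx, rfl⟩

lemma pcomp_domain_le : (S.pcomp T).domain ≤ T.domain := by
  rintro x ⟨z, _, rfl⟩; exact z.2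

lemma pcomp_apply (x : (S.pcomp T).domain) (hx : (x : E) ∈ T.domain)
    (hTx : T ⟨x, hx⟩ ∈ S.domain) :
    (S.pcomp T) x = S ⟨T ⟨x, hx⟩, hTx⟩ := by
  set e := (Submodule.equivMapOfInjective T.domain.subtype (Submodule.injective_subtype _)
      (S.domain.comap T.toFun))
  have hy : ((e.symm x : ↥(S.domain.comap T.toFun)) : T.domain) = ⟨x, hx⟩ := by
    apply Subtype.ext
    have h := congrArg (Subtype.val) (e.apply_symm_apply x)
    rw [show (e (e.symm x) : E) = ((e.symm x : T.domain) : E) from rfl] at h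
    exact h
  show S.toFun _ = S.toFun _
  congr 1
  apply Subtype.ext
  show T.toFun ((e.symm x : ↥(S.domain.comap T.toFun)) : T.domain) = T.toFun ⟨x, hx⟩
  rw [hy]

end LinearPMap

namespace LinearPMap
variable {H₁ H₂ : Type*}
    [NormedAddCommGroup H₁] [InnerProductSpace ℝ H₁] [CompleteSpace H₁]
    [NormedAddCommGroup H₂] [InnerProductSpace ℝ H₂] [CompleteSpace H₂]

lemma adjoint_isClosed' (T : H₁ →ₗ.[ℝ] H₂) (hT : Dense (T.domain : Set H₁)) :
    T.adjoint.IsClosed := by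
  have hgraph : (T.adjoint.graph : Set (H₂ × H₁)) =
      ⋂ x : T.domain, {p : H₂ × H₁ | ⟪p.2, (x : H₁)⟫ = ⟪p.1, T x⟫} := by
    ext ⟨y, z⟩
    simp only [Set.mem_iInter, Set.mem_setOf_eq, SetLike.mem_coe, mem_graph_iff]
    constructor
    · rintro ⟨y', hy', rfl⟩ x
      have := T.adjoint_isFormalAdjoint hT y' x
      simp only [hy'] at this ⊢
      exact this
    · intro h
      have hy : y ∈ T.adjoint.domain :=
        T.mem_adjoint_domain_of_exists y ⟨z, h⟩
      refine ⟨⟨y, hy⟩, rfl, ?_⟩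
      exact adjoint_apply_eq hT ⟨y, hy⟩ fun x => h x
  rw [IsClosed, hgraph]
  exact isClosed_iInter fun x => isClosed_eq
    (continuous_snd.inner continuous_const) (continuous_fst.inner continuous_const)

end LinearPMap

section Core
variable {H₁ H₂ : Type*}
    [NormedAddCommGroup H₁] [InnerProductSpace ℝ H₁] [CompleteSpace H₁]
    [NormedAddCommGroup H₂] [InnerProductSpace ℝ H₂] [CompleteSpace H₂]

open LinearPMap in
lemma riesz_key (T : H₁ →ₗ.[ℝ] H₂) (hTc : T.IsClosed) (x : H₁) :
    ∃ w : T.domain, ∀ u : T.domain,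
      ⟪x, (u : H₁)⟫ = ⟪(w : H₁), (u : H₁)⟫ + ⟪T w, T u⟫ := by
  classical
  set e : WithLp 2 (H₁ × H₂) ≃L[ℝ] H₁ × H₂ :=
    WithLp.prodContinuousLinearEquiv 2 ℝ H₁ H₂ with he
  set G' : Submodule ℝ (WithLp 2 (H₁ × H₂)) :=
    T.graph.comap (e.toLinearEquiv : WithLp 2 (H₁ × H₂) →ₗ[ℝ] H₁ × H₂) with hG'
  have hclosed : IsClosed (G' : Set (WithLp 2 (H₁ × H₂))) := by
    have : (G' : Set (WithLp 2 (H₁ × H₂))) = ⇑e ⁻¹' (T.graph : Set (H₁ × H₂)) := rfl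
    rw [this]
    exact hTc.preimage e.continuous
  haveI : CompleteSpace G' := hclosed.completeSpace_coe
  set φ : ↥G' →L[ℝ] ℝ := (innerSL ℝ x).comp ((ContinuousLinearMap.fst ℝ H₁ H₂).comp
    (((e : WithLp 2 (H₁ × H₂) →L[ℝ] H₁ × H₂)).comp (Submodule.subtypeL G'))) with hφ
  set w0 : ↥G' := (InnerProductSpace.toDual ℝ ↥G').symm φ with hw0
  have hw0p : ∀ g : ↥G', ⟪w0, g⟫ = ⟪x, (e (g : WithLp 2 (H₁ × H₂))).1⟫ := fun g =>
    InnerProductSpace.toDual_symm_apply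
  -- w0 is in the graph
  have hw0g : e (w0 : WithLp 2 (H₁ × H₂)) ∈ T.graph := w0.2
  rw [mem_graph_iff] at hw0g
  obtain ⟨w, hw1, hw2⟩ := hw0g
  refine ⟨w, fun u => ?_⟩
  -- the element of G' corresponding to u
  have hu : (e.symm ((u : H₁), T u)) ∈ G' := by
    show e (e.symm _) ∈ T.graph
    rw [e.apply_symm_apply]
    exact mem_graph T u
  have h1 := hw0p ⟨e.symm ((u : H₁), T u), hu⟩
  rw [e.apply_symm_apply] at h1
  -- compute the inner product on G' explicitly
  have h2 : ⟪w0, (⟨e.symm ((u : H₁), T u), hu⟩ : ↥G')⟫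
      = ⟪(w : H₁), (u : H₁)⟫ + ⟪T w, T u⟫ := by
    have : ⟪w0, (⟨e.symm ((u : H₁), T u), hu⟩ : ↥G')⟫
        = ⟪(w0 : WithLp 2 (H₁ × H₂)).ofLp.1, (u : H₁)⟫
          + ⟪(w0 : WithLp 2 (H₁ × H₂)).ofLp.2, T u⟫ := rfl
    rw [this]
    rw [show ((w0 : WithLp 2 (H₁ × H₂)).ofLp.1) = (w : H₁) from hw1.symm,
      show ((w0 : WithLp 2 (H₁ × H₂)).ofLp.2) = T w from hw2.symm]
  rw [h1] at h2
  rw [h2]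

open LinearPMap in
lemma vonNeumann (T : H₁ →ₗ.[ℝ] H₂) (hT : Dense (T.domain : Set H₁))
    (hTc : T.IsClosed) :
    Dense (((T.adjoint.pcomp T).domain : Set H₁)) ∧
      (T.adjoint.pcomp T).adjoint = T.adjoint.pcomp T ∧
      (T.adjoint.pcomp T).domain ≤ T.domain := by
  classical
  set S := T.adjoint.pcomp T with hS
  have hdomle : S.domain ≤ T.domain := pcomp_domain_le _ _
  -- value of S in terms of T and T†
  have hval : ∀ v : S.domain, ∀ (hv1 : (v : H₁) ∈ T.domain)
      (hv2 : T ⟨v, hv1⟩ ∈ T.adjoint.domain),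
      S v = T.adjoint ⟨T ⟨v, hv1⟩, hv2⟩ := fun v hv1 hv2 =>
    pcomp_apply _ _ v hv1 hv2
  have hmem : ∀ v : S.domain, ∃ (hv1 : (v : H₁) ∈ T.domain),
      T ⟨v, hv1⟩ ∈ T.adjoint.domain := fun v => (mem_pcomp_domain _ _).mp v.2
  -- ⟪S v, u⟫ = ⟪T v, T u⟫ for u ∈ dom T
  have hSinner : ∀ (v : S.domain) (u : T.domain),
      ⟪S v, (u : H₁)⟫ = ⟪T ⟨v, hdomle v.2⟩, T u⟫ := by
    intro v u
    obtain ⟨hv1, hv2⟩ := hmem v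
    rw [hval v hv1 hv2]
    have := T.adjoint_isFormalAdjoint hT ⟨T ⟨v, hv1⟩, hv2⟩ u
    simpa using this
  -- surjectivity of 1 + S
  have hsurj : ∀ x : H₁, ∃ w : S.domain, (w : H₁) + S w = x := by
    intro x
    obtain ⟨w, hw⟩ := riesz_key T hTc x
    have hw' : ∀ u : T.domain, ⟪x - (w : H₁), (u : H₁)⟫ = ⟪T w, T u⟫ := by
      intro u
      rw [inner_sub_left, hw u]
      ring
    have hTw : T w ∈ T.adjoint.domain :=
      T.mem_adjoint_domain_of_exists (T w) ⟨x - (w : H₁), hw'⟩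
    have hTwval : T.adjoint ⟨T w, hTw⟩ = x - (w : H₁) :=
      adjoint_apply_eq hT ⟨T w, hTw⟩ hw'
    have hwS : (w : H₁) ∈ S.domain := by
      rw [hS, mem_pcomp_domain]
      refine ⟨w.2, ?_⟩
      convert hTw using 2
    refine ⟨⟨w, hwS⟩, ?_⟩
    obtain ⟨hv1', hv2'⟩ := hmem ⟨(w : H₁), hwS⟩
    rw [hval ⟨(w : H₁), hwS⟩ hv1' hv2']
    have h1 : (⟨(w : H₁), hv1'⟩ : T.domain) = w := Subtype.ext rfl
    have h2 : (⟨T ⟨(w : H₁), hv1'⟩, hv2'⟩ : T.adjoint.domain)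
        = ⟨T w, hTw⟩ := Subtype.ext (congrArg (fun z => T z) h1)
    have h3 : T.adjoint ⟨T ⟨(w : H₁), hv1'⟩, hv2'⟩ = T.adjoint ⟨T w, hTw⟩ :=
      congrArg (fun z : T.adjoint.domain => T.adjoint z) h2
    rw [h3, hTwval]
    abel
  -- dense domain
  have hSdense : Dense ((S.domain : Set H₁)) := by
    rw [Submodule.dense_iff_topologicalClosure_eq_top,
      Submodule.topologicalClosure_eq_top_iff]
    rw [Submodule.eq_bot_iff]
    intro x hx
    obtain ⟨w, hwx⟩ := hsurj x
    have h0 : ⟪x, (w : H₁)⟫ = 0 := by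
      rw [real_inner_comm]
      exact hx _ w.2
    rw [← hwx, inner_add_left, hSinner w ⟨w, hdomle w.2⟩] at h0
    have h1 : (0:ℝ) ≤ ⟪(w:H₁), (w:H₁)⟫ := real_inner_self_nonneg
    have h2 : (0:ℝ) ≤ ⟪T ⟨w, hdomle w.2⟩, T ⟨w, hdomle w.2⟩⟫ := real_inner_self_nonneg
    have hw0 : (w : H₁) = 0 := by
      have : ⟪(w:H₁), (w:H₁)⟫ = 0 := by linarith
      exact inner_self_eq_zero.mp this
    have : w = 0 := Subtype.ext hw0
    rw [← hwx, this]
    simp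
  -- symmetry
  have hsym : S.IsFormalAdjoint S := by
    intro v u
    calc ⟪S v, (u:H₁)⟫ = ⟪T ⟨v, hdomle v.2⟩, T ⟨u, hdomle u.2⟩⟫ :=
          hSinner v ⟨u, hdomle u.2⟩
      _ = ⟪T ⟨u, hdomle u.2⟩, T ⟨v, hdomle v.2⟩⟫ := real_inner_comm _ _
      _ = ⟪S u, (v:H₁)⟫ := (hSinner u ⟨v, hdomle v.2⟩).symm
      _ = ⟪(v:H₁), S u⟫ := real_inner_comm _ _
  have hle : S ≤ S.adjoint := hsym.le_adjoint hSdense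
  -- self-adjointness
  have hadj : S.adjoint = S := by
    apply le_antisymm
    · constructor
      · -- domain inclusion
        intro y hy
        obtain ⟨w, hw⟩ := hsurj ((y : H₁) + S.adjoint ⟨y, hy⟩)
        have hkey : ∀ v : S.domain, ⟪(y : H₁) - (w : H₁), (v : H₁) + S v⟫ = 0 := by
          intro v
          have e1 : ⟪S.adjoint ⟨y, hy⟩, (v : H₁)⟫ = ⟪(y : H₁), S v⟫ :=
            S.adjoint_isFormalAdjoint hSdense ⟨y, hy⟩ v
          have e2 : ⟪S w, (v : H₁)⟫ = ⟪(w : H₁), S v⟫ := by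
            calc ⟪S w, (v : H₁)⟫ = ⟪(v : H₁), S w⟫ := real_inner_comm _ _
              _ = ⟪S v, (w : H₁)⟫ := (hsym v w).symm
              _ = ⟪(w : H₁), S v⟫ := real_inner_comm _ _
          have e3 : ⟪(y : H₁), (v:H₁)⟫ + ⟪S.adjoint ⟨y, hy⟩, (v:H₁)⟫
              = ⟪(w : H₁), (v:H₁)⟫ + ⟪S w, (v:H₁)⟫ := by
            rw [← inner_add_left, ← inner_add_left, hw]
          have expand : ⟪(y : H₁) - (w : H₁), (v : H₁) + S v⟫
              = (⟪(y:H₁), (v:H₁)⟫ + ⟪(y:H₁), S v⟫)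
                - (⟪(w:H₁), (v:H₁)⟫ + ⟪(w:H₁), S v⟫) := by
            rw [inner_sub_left, inner_add_right, inner_add_right]
          rw [expand]
          linarith [e1, e2, e3]
        have hyw : (y : H₁) = (w : H₁) := by
          have : ∀ z : H₁, ⟪(y : H₁) - (w : H₁), z⟫ = 0 := by
            intro z
            obtain ⟨v, hv⟩ := hsurj z
            rw [← hv]; exact hkey v
          have := inner_self_eq_zero.mp (this ((y:H₁) - (w:H₁)))
          rwa [sub_eq_zero] at this
        rw [hyw]; exact w.2
      · -- values agree
        intro y v hyv
        obtain ⟨w, hw⟩ := hsurj ((y : H₁) + S.adjoint y)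
        have hkey : ∀ v' : S.domain, ⟪(y : H₁) - (w : H₁), (v' : H₁) + S v'⟫ = 0 := by
          intro v'
          have e1 : ⟪S.adjoint y, (v' : H₁)⟫ = ⟪(y : H₁), S v'⟫ :=
            S.adjoint_isFormalAdjoint hSdense y v'
          have e2 : ⟪S w, (v' : H₁)⟫ = ⟪(w : H₁), S v'⟫ := by
            calc ⟪S w, (v' : H₁)⟫ = ⟪(v' : H₁), S w⟫ := real_inner_comm _ _
              _ = ⟪S v', (w : H₁)⟫ := (hsym v' w).symm
              _ = ⟪(w : H₁), S v'⟫ := real_inner_comm _ _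
          have e3 : ⟪(y : H₁), (v':H₁)⟫ + ⟪S.adjoint y, (v':H₁)⟫
              = ⟪(w : H₁), (v':H₁)⟫ + ⟪S w, (v':H₁)⟫ := by
            rw [← inner_add_left, ← inner_add_left, hw]
          have expand : ⟪(y : H₁) - (w : H₁), (v' : H₁) + S v'⟫
              = (⟪(y:H₁), (v':H₁)⟫ + ⟪(y:H₁), S v'⟫)
                - (⟪(w:H₁), (v':H₁)⟫ + ⟪(w:H₁), S v'⟫) := by
            rw [inner_sub_left, inner_add_right, inner_add_right]
          rw [expand]
          linarith [e1, e2, e3]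
        have hyw : (y : H₁) = (w : H₁) := by
          have : ∀ z : H₁, ⟪(y : H₁) - (w : H₁), z⟫ = 0 := by
            intro z
            obtain ⟨v', hv'⟩ := hsurj z
            rw [← hv']; exact hkey v'
          have := inner_self_eq_zero.mp (this ((y:H₁) - (w:H₁)))
          rwa [sub_eq_zero] at this
        -- S† y = S w and S w = S v
        have hvw : v = w := Subtype.ext (hyv.symm.trans hyw)
        have : S.adjoint y = ((w : H₁) + S w) - (w : H₁) := by
          rw [hw, hyw]; abel
        rw [this, hvw]; abel
    · exact hle
  exact ⟨hSdense, hadj, hdomle⟩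

end Core

section Glue
variable {H₁ H₂ : Type*}
    [NormedAddCommGroup H₁] [InnerProductSpace ℝ H₁] [CompleteSpace H₁]
    [NormedAddCommGroup H₂] [InnerProductSpace ℝ H₂] [CompleteSpace H₂]

open LinearPMap in
lemma oneSide (A : H₁ →ₗ.[ℝ] H₂) (B : H₂ →ₗ.[ℝ] H₁)
    (hA : Dense (A.domain : Set H₁)) (hB : Dense (B.domain : Set H₂))
    (hfa : A.IsFormalAdjoint B) :
    Dense ((A.adjoint.pcomp A.closure).domain : Set H₁) ∧
      (A.adjoint.pcomp A.closure).adjoint = A.adjoint.pcomp A.closure ∧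
      (A.adjoint.pcomp A.closure).domain ≤ A.closure.domain := by
  have hAB : A ≤ B.adjoint := hfa.symm.le_adjoint hB
  have hclosable : A.IsClosable := ((B.adjoint_isClosed' hB).isClosable).leIsClosable hAB
  have hdense_c : Dense ((A.closure.domain : Set H₁)) :=
    hA.mono (A.le_closure.1 : (A.domain : Set H₁) ⊆ A.closure.domain)
  have hclosed : A.closure.IsClosed := hclosable.closure_isClosed
  -- A† = (Ā)†
  have hadj_eq : A.adjoint = A.closure.adjoint := by
    apply le_antisymm
    · -- A† ≤ Ā†, via Ā.IsFormalAdjoint A†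
      refine IsFormalAdjoint.le_adjoint hdense_c ?_
      intro x y
      -- (↑x, Ā x) ∈ closure of A.graph
      have hx : ((x : H₁), A.closure x) ∈ A.graph.topologicalClosure := by
        rw [hclosable.graph_closure_eq_closure_graph]
        exact A.closure.mem_graph x
      set Z : Set (H₁ × H₂) := {p | ⟪p.2, (y : H₂)⟫ = ⟪p.1, A.adjoint y⟫} with hZ
      have hZclosed : IsClosed Z := isClosed_eq
        (continuous_snd.inner continuous_const) (continuous_fst.inner continuous_const)
      have hsub : (A.graph : Set (H₁ × H₂)) ⊆ Z := by
        rintro p hp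
        rw [SetLike.mem_coe, mem_graph_iff] at hp
        obtain ⟨u, hu1, hu2⟩ := hp
        show ⟪p.2, (y : H₂)⟫ = ⟪p.1, A.adjoint y⟫
        rw [← hu1, ← hu2]
        have := A.adjoint_isFormalAdjoint hA y u
        rw [real_inner_comm, ← this, real_inner_comm]
      have hmem : ((x : H₁), A.closure x) ∈ Z := by
        have : (A.graph.topologicalClosure : Set (H₁ × H₂)) ⊆ Z := by
          rw [Submodule.topologicalClosure_coe]
          exact closure_minimal hsub hZclosed
        exact this hx
      have : ⟪A.closure x, (y : H₂)⟫ = ⟪(x : H₁), A.adjoint y⟫ := hmem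
      exact this
    · -- Ā† ≤ A†, via A.IsFormalAdjoint Ā†
      refine IsFormalAdjoint.le_adjoint hA ?_
      intro x y
      obtain ⟨u, hu1, hu2⟩ := exists_of_le A.le_closure x
      have := A.closure.adjoint_isFormalAdjoint hdense_c y u
      rw [hu2, real_inner_comm, ← this, real_inner_comm, hu1]
  rw [hadj_eq]
  exact vonNeumann A.closure hdense_c hclosed

end Glue

/-- **Lemma 2.2 (ii) of the paper.** If `(A, B)` is a symmetric pair of densely defined
operators between Hilbert spaces `H₁` and `H₂`, then `A* ∘ Ā` is a densely defined
self-adjoint operator on `H₁` and `B* ∘ B̄` is a densely defined self-adjoint operator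
on `H₂` (with domains contained in `dom Ā`, resp. `dom B̄`). -/
theorem symmetric_pair_adjoint_comp_closure_selfAdjoint
    {H₁ H₂ : Type*}
    [NormedAddCommGroup H₁] [InnerProductSpace ℝ H₁] [CompleteSpace H₁]
    [NormedAddCommGroup H₂] [InnerProductSpace ℝ H₂] [CompleteSpace H₂]
    (A : H₁ →ₗ.[ℝ] H₂) (B : H₂ →ₗ.[ℝ] H₁)
    (hA : Dense (A.domain : Set H₁)) (hB : Dense (B.domain : Set H₂))
    (hpair : ∀ (φ : A.domain) (ψ : B.domain),
      ⟪A φ, (ψ : H₂)⟫ = ⟪(φ : H₁), B ψ⟫) :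
    (Dense ((A.adjoint.pcomp A.closure).domain : Set H₁) ∧
      (A.adjoint.pcomp A.closure).adjoint = A.adjoint.pcomp A.closure ∧
      (A.adjoint.pcomp A.closure).domain ≤ A.closure.domain) ∧
    (Dense ((B.adjoint.pcomp B.closure).domain : Set H₂) ∧
      (B.adjoint.pcomp B.closure).adjoint = B.adjoint.pcomp B.closure ∧
      (B.adjoint.pcomp B.closure).domain ≤ B.closure.domain) := by
  have hfaA : A.IsFormalAdjoint B := fun φ ψ => hpair φ ψ
  exact ⟨oneSide A B hA hB hfaA, oneSide B A hB hA hfaA.symm⟩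
end

section
/- Let A be a densely defined symmetric operator on a Hilbert space H with ⟨φ, Aφ⟩ ≥ ‖φ‖² for all φ ∈ dom A, let H_A be the completion of dom A under ⟨ψ,φ⟩_A = ⟨ψ,Aφ⟩, and J: H_A → H the contractive inclusion. Then JJ*Aφ = φ for every φ ∈ dom A; in particular JJ* is injective on ran A and (JJ*)⁻¹ extends A. -/
open scoped RealInnerProductSpace

/-- **Part (1) of Theorem 3.4 of the paper.** With `A` densely defined, symmetric and
coercive (`⟨φ, Aφ⟩ ≥ ‖φ‖²`) on a Hilbert space `H`, `H_A` the Hilbert completion of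
`dom A` under `⟨ψ,φ⟩_A = ⟨ψ, Aφ⟩` (realized by `ι : dom A → H_A` with dense range), and
`J : H_A → H` the contractive inclusion (`J (ι φ) = φ`), one has `J J* A φ = φ` for every
`φ ∈ dom A`. In particular `J J*` is injective on `ran A`, and `(J J*)⁻¹` extends `A`. -/
theorem friedrichs_JJadj_inverse
    {H H_A : Type*}
    [NormedAddCommGroup H] [InnerProductSpace ℝ H] [CompleteSpace H]
    [NormedAddCommGroup H_A] [InnerProductSpace ℝ H_A] [CompleteSpace H_A]
    (A : H →ₗ.[ℝ] H)
    (hdense : Dense (A.domain : Set H))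
    (hsymm : ∀ φ ψ : A.domain, ⟪(φ : H), A ψ⟫ = ⟪A φ, (ψ : H)⟫)
    (hcoercive : ∀ φ : A.domain, ‖(φ : H)‖ ^ 2 ≤ ⟪(φ : H), A φ⟫)
    (ι : A.domain →ₗ[ℝ] H_A) (hι_dense : DenseRange ι)
    (hι : ∀ φ ψ : A.domain, ⟪ι φ, ι ψ⟫ = ⟪(φ : H), A ψ⟫)
    (J : H_A →L[ℝ] H) (hJ : ∀ φ : A.domain, J (ι φ) = φ) :
    (∀ φ : A.domain, J (ContinuousLinearMap.adjoint J (A φ)) = φ) ∧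
      Set.InjOn (fun y => J (ContinuousLinearMap.adjoint J y))
        {y : H | ∃ φ : A.domain, A φ = y} := by
  have hdR : Dense ((LinearMap.range ι : Submodule ℝ H_A) : Set H_A) := by
    rwa [LinearMap.coe_range]
  have key : ∀ φ : A.domain, ContinuousLinearMap.adjoint J (A φ) = ι φ := by
    intro φ
    refine hdR.eq_of_inner_left ℝ fun v hv => ?_
    obtain ⟨ψ, hψ⟩ := hv
    rw [← hψ, ContinuousLinearMap.adjoint_inner_left, hJ, hι]
    exact (hsymm φ ψ).symm
  have main : ∀ φ : A.domain, J (ContinuousLinearMap.adjoint J (A φ)) = φ := by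
    intro φ; rw [key, hJ]
  refine ⟨main, ?_⟩
  rintro y₁ ⟨φ₁, rfl⟩ y₂ ⟨φ₂, rfl⟩ h
  simp only [main] at h
  rw [Subtype.coe_injective h]
end

section
/- Let A be a densely defined symmetric operator on a Hilbert space H with ⟨φ, Aφ⟩ ≥ ‖φ‖², H_A the form completion, and J: H_A → H the contractive inclusion. Then ran(JJ*) = dom A* ∩ J(H_A), where dom A* = {ψ ∈ H : ∃ C < ∞, |⟨ψ, Aφ⟩| ≤ C‖φ‖ for all φ ∈ dom A}. Consequently (JJ*)⁻¹, with domain dom A* ∩ J(H_A), is a self-adjoint extension of A (the Friedrichs extension). -/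
open scoped RealInnerProductSpace

/-- **Part (2) of Theorem 3.4 of the paper (the Friedrichs extension).**
With `A` densely defined, symmetric and coercive (`⟨φ, Aφ⟩ ≥ ‖φ‖²`) on a Hilbert space
`H`, `H_A` the form completion of `dom A` (realized by `ι : dom A → H_A` with dense range
and `⟪ι ψ, ι φ⟫ = ⟨ψ, Aφ⟩`), and `J : H_A → H` the contractive inclusion (`J (ι φ) = φ`),
one has `ran (J J*) = dom A* ∩ J(H_A)`, where
`dom A* = {ψ ∈ H : ∃ C < ∞, |⟨ψ, Aφ⟩| ≤ C ‖φ‖ for all φ ∈ dom A}`.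
Consequently `(J J*)⁻¹`, defined on `dom A* ∩ J(H_A)`, is a self-adjoint extension of
`A` — the Friedrichs extension. -/
theorem friedrichs_range_JJadj
    {H H_A : Type*}
    [NormedAddCommGroup H] [InnerProductSpace ℝ H] [CompleteSpace H]
    [NormedAddCommGroup H_A] [InnerProductSpace ℝ H_A] [CompleteSpace H_A]
    (A : H →ₗ.[ℝ] H)
    (hdense : Dense (A.domain : Set H))
    (hsymm : ∀ φ ψ : A.domain, ⟪(φ : H), A ψ⟫ = ⟪A φ, (ψ : H)⟫)
    (hcoercive : ∀ φ : A.domain, ‖(φ : H)‖ ^ 2 ≤ ⟪(φ : H), A φ⟫)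
    (ι : A.domain →ₗ[ℝ] H_A) (hι_dense : DenseRange ι)
    (hι : ∀ φ ψ : A.domain, ⟪ι φ, ι ψ⟫ = ⟪(φ : H), A ψ⟫)
    (J : H_A →L[ℝ] H) (hJ : ∀ φ : A.domain, J (ι φ) = φ) :
    Set.range (fun g : H => J (ContinuousLinearMap.adjoint J g)) =
      {ψ : H | ∃ C : ℝ, ∀ φ : A.domain, |⟪ψ, A φ⟫| ≤ C * ‖(φ : H)‖} ∩ Set.range J := by
  have key : ∀ (φ : A.domain) (x : H_A), ⟪J x, A φ⟫ = ⟪x, ι φ⟫ := by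
    intro φ
    have h := hι_dense.equalizer
      (g := fun x : H_A => (⟪J x, A φ⟫ : ℝ))
      (h := fun x : H_A => (⟪x, ι φ⟫ : ℝ))
      (J.continuous.inner continuous_const)
      (continuous_id.inner continuous_const)
      (by
        funext ψ
        simp only [Function.comp_apply, hJ, hι])
    exact fun x => congrFun h x
  ext ψ
  simp only [Set.mem_inter_iff, Set.mem_setOf_eq, Set.mem_range]
  constructor
  · rintro ⟨g, rfl⟩
    refine ⟨⟨‖g‖, fun φ => ?_⟩, ContinuousLinearMap.adjoint J g, rfl⟩
    have h1 : ⟪J (ContinuousLinearMap.adjoint J g), A φ⟫ = ⟪g, (φ : H)⟫ := by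
      rw [key φ, ContinuousLinearMap.adjoint_inner_left, hJ]
    rw [h1]
    exact abs_real_inner_le_norm g φ
  · rintro ⟨⟨C, hC⟩, y, rfl⟩
    let f : A.domain →ₗ[ℝ] ℝ :=
      { toFun := fun φ => ⟪J y, A φ⟫
        map_add' := by
          intro a b
          show (⟪J y, A (a + b)⟫ : ℝ) = ⟪J y, A a⟫ + ⟪J y, A b⟫
          rw [A.map_add]; exact inner_add_right _ _ _
        map_smul' := by
          intro c a
          show (⟪J y, A (c • a)⟫ : ℝ) = c • ⟪J y, A a⟫
          rw [A.map_smul]; simp [inner_smul_right] }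
    have hfb : ∀ φ : A.domain, ‖f φ‖ ≤ C * ‖φ‖ := by
      intro φ
      show ‖(⟪J y, A φ⟫ : ℝ)‖ ≤ C * ‖φ‖
      simpa [Real.norm_eq_abs] using hC φ
    let fcont : A.domain →L[ℝ] ℝ := f.mkContinuous C hfb
    obtain ⟨F, hF, -⟩ := exists_extension_norm_eq A.domain fcont
    obtain ⟨g₀, hg₀⟩ := (InnerProductSpace.toDual ℝ H).surjective F
    have hg : ∀ φ : A.domain, (⟪g₀, (φ : H)⟫ : ℝ) = ⟪J y, A φ⟫ := by
      intro φ
      have h1 : F φ = fcont φ := hF φ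
      rw [← hg₀] at h1
      have h2 : fcont φ = ⟪J y, A φ⟫ := rfl
      rw [h2] at h1
      simpa [InnerProductSpace.toDual_apply_apply] using h1
    have hadj : ContinuousLinearMap.adjoint J g₀ = y := by
      have h := hι_dense.equalizer
        (g := fun v : H_A => (⟪ContinuousLinearMap.adjoint J g₀, v⟫ : ℝ))
        (h := fun v : H_A => (⟪y, v⟫ : ℝ))
        (continuous_const.inner continuous_id)
        (continuous_const.inner continuous_id)
        (by
          funext φ
          simp only [Function.comp_apply]
          rw [ContinuousLinearMap.adjoint_inner_left, hJ, hg, key])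
      exact ext_inner_right ℝ (fun v => congrFun h v)
    exact ⟨g₀, by show J (ContinuousLinearMap.adjoint J g₀) = J y; rw [hadj]⟩
end

section
/- There is a bijective correspondence between densely defined closed quadratic forms q on a Hilbert space H satisfying q(φ,φ) ≥ ‖φ‖² and self-adjoint operators A on H with A ≥ 1: given A, set dom q = dom A^{1/2} and q(φ,ψ) = ⟨A^{1/2}φ, A^{1/2}ψ⟩; given q, let J: dom q → H be the inclusion (with dom q a Hilbert space under q) and set A = (JJ*)⁻¹. -/
open scoped RealInnerProductSpace

/-- A densely defined closed quadratic (bilinear, symmetric) form `q` on a Hilbert space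
`H` satisfying `q(φ,φ) ≥ ‖φ‖²`. Closedness means that `dom q` is complete in the norm
`q(φ,φ)^{1/2}`, expressed via Cauchy sequences. -/
structure ClosedQuadraticForm (H : Type*) [NormedAddCommGroup H]
    [InnerProductSpace ℝ H] where
  dom : Submodule ℝ H
  dense : Dense (dom : Set H)
  q : dom →ₗ[ℝ] dom →ₗ[ℝ] ℝ
  symm : ∀ φ ψ : dom, q φ ψ = q ψ φ
  ge_one : ∀ φ : dom, ‖(φ : H)‖ ^ 2 ≤ q φ φ
  closed' : ∀ u : ℕ → dom,
    (∀ ε > (0:ℝ), ∃ N, ∀ m ≥ N, ∀ n ≥ N, q (u m - u n) (u m - u n) < ε) →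
    ∃ v : dom, ∀ ε > (0:ℝ), ∃ N, ∀ n ≥ N, q (u n - v) (u n - v) < ε

/-- A self-adjoint operator `A` on `H` with `A ≥ 1`, i.e. `⟨φ, Aφ⟩ ≥ ‖φ‖²`. -/
structure SelfAdjointOpGeOne (H : Type*) [NormedAddCommGroup H]
    [InnerProductSpace ℝ H] [CompleteSpace H] where
  op : H →ₗ.[ℝ] H
  dense : Dense (op.domain : Set H)
  selfAdjoint : op.adjoint = op
  ge_one : ∀ φ : op.domain, ‖(φ : H)‖ ^ 2 ≤ ⟪(φ : H), op φ⟫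

namespace Kato

variable {H : Type*} [NormedAddCommGroup H] [InnerProductSpace ℝ H] [CompleteSpace H]

private lemma le_of_sq_le_sq {a b : ℝ} (ha : 0 ≤ a) (hb : 0 ≤ b) (h : a ^ 2 ≤ b ^ 2) :
    a ≤ b := by nlinarith

lemma pmap_graph_iff (f : H →ₗ.[ℝ] H) (ψ η : H) :
    (ψ, η) ∈ f.graph ↔ ∃ h : ψ ∈ f.domain, f ⟨ψ, h⟩ = η := by
  rw [LinearPMap.mem_graph_iff]
  constructor
  · rintro ⟨⟨a, ha⟩, hy1, hy2⟩
    dsimp only at hy1 hy2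
    subst hy1
    exact ⟨ha, hy2⟩
  · rintro ⟨h, hv⟩
    exact ⟨⟨ψ, h⟩, rfl, hv⟩

/-- The defining correspondence between a closed form and a self-adjoint operator. -/
def Corr (q : ClosedQuadraticForm H) (A : SelfAdjointOpGeOne H) : Prop :=
  ∀ ψ η : H, (∃ h : ψ ∈ A.op.domain, A.op ⟨ψ, h⟩ = η) ↔
    (∃ hψ : ψ ∈ q.dom, ∀ φ : q.dom, q.q φ ⟨ψ, hψ⟩ = ⟪(φ : H), η⟫)

/-! ### The form Hilbert space -/

variable (q : ClosedQuadraticForm H)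

/-- Type synonym: the domain of `q` viewed with the inner product `q`. -/
def Hq (q : ClosedQuadraticForm H) : Type _ := q.dom

instance : AddCommGroup (Hq q) := inferInstanceAs (AddCommGroup q.dom)
instance : Module ℝ (Hq q) := inferInstanceAs (Module ℝ q.dom)

variable {q}

/-- Inclusion `q.dom → Hq q`. -/
def Hq.mk' (x : q.dom) : Hq q := x

/-- Projection `Hq q → q.dom`. -/
def Hq.toDom (x : Hq q) : q.dom := x

@[simp] lemma Hq.toDom_mk' (x : q.dom) : (Hq.mk' x).toDom = x := rfl
@[simp] lemma Hq.toDom_add (x y : Hq q) : (x + y).toDom = x.toDom + y.toDom := rfl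
@[simp] lemma Hq.toDom_sub (x y : Hq q) : (x - y).toDom = x.toDom - y.toDom := rfl
@[simp] lemma Hq.toDom_smul (r : ℝ) (x : Hq q) : (r • x).toDom = r • x.toDom := rfl
@[simp] lemma Hq.toDom_zero : (0 : Hq q).toDom = 0 := rfl

lemma Hq.toDom_injective : Function.Injective (Hq.toDom (q := q)) := fun _ _ h => h

variable (q)

noncomputable def hqCore : InnerProductSpace.Core ℝ (Hq q) where
  inner x y := q.q x.toDom y.toDom
  conj_inner_symm x y := by simpa using q.symm y.toDom x.toDom
  re_inner_nonneg x := by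
    simpa using le_trans (by positivity : (0:ℝ) ≤ ‖(x.toDom : H)‖ ^ 2) (q.ge_one x.toDom)
  add_left x y z := by
    show q.q (x.toDom + y.toDom) z.toDom = q.q x.toDom z.toDom + q.q y.toDom z.toDom
    rw [map_add, LinearMap.add_apply]
  smul_left x y r := by
    show q.q (r • x.toDom) y.toDom = (starRingEnd ℝ) r * q.q x.toDom y.toDom
    rw [map_smul, LinearMap.smul_apply]
    simp
  definite x h := by
    have h1 := q.ge_one x.toDom
    rw [show q.q x.toDom x.toDom = (0:ℝ) from h] at h1
    have h2 : ‖(x.toDom : H)‖ = 0 := by nlinarith [norm_nonneg ((x.toDom : H))]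
    have h3 : (x.toDom : H) = 0 := norm_eq_zero.mp h2
    exact Hq.toDom_injective (by simpa using Subtype.ext h3)

noncomputable instance : NormedAddCommGroup (Hq q) := (hqCore q).toNormedAddCommGroup
noncomputable instance : InnerProductSpace ℝ (Hq q) := InnerProductSpace.ofCore _

variable {q}

@[simp] lemma hq_inner_def (x y : Hq q) : ⟪x, y⟫ = q.q x.toDom y.toDom := rfl

lemma hq_norm_sq (x : Hq q) : ‖x‖ ^ 2 = q.q x.toDom x.toDom :=
  (real_inner_self_eq_norm_sq x).symm

instance : CompleteSpace (Hq q) := by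
  apply Metric.complete_of_cauchySeq_tendsto
  intro u hu
  have hcau : ∀ ε > (0:ℝ), ∃ N, ∀ m ≥ N, ∀ n ≥ N,
      q.q ((u m).toDom - (u n).toDom) ((u m).toDom - (u n).toDom) < ε := by
    intro ε hε
    rw [Metric.cauchySeq_iff] at hu
    obtain ⟨N, hN⟩ := hu (Real.sqrt ε) (Real.sqrt_pos.mpr hε)
    refine ⟨N, fun m hm n hn => ?_⟩
    have h1 := hN m hm n hn
    rw [dist_eq_norm] at h1
    have h0 := norm_nonneg (u m - u n)
    have h2 : ‖u m - u n‖ ^ 2 < ε := by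
      nlinarith [Real.sq_sqrt hε.le, Real.sqrt_nonneg ε]
    rw [hq_norm_sq] at h2
    simpa using h2
  obtain ⟨v, hv⟩ := q.closed' (fun n => (u n).toDom) hcau
  refine ⟨Hq.mk' v, ?_⟩
  rw [Metric.tendsto_atTop]
  intro ε hε
  obtain ⟨N, hN⟩ := hv (ε ^ 2) (by positivity)
  refine ⟨N, fun n hn => ?_⟩
  have h2 := hN n hn
  have h3 : dist (u n) (Hq.mk' v) ^ 2 < ε ^ 2 := by
    rw [dist_eq_norm, hq_norm_sq]
    simpa using h2
  nlinarith [dist_nonneg (x := u n) (y := Hq.mk' v)]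

variable (q)

/-- The inclusion `Hq q → H` as a continuous linear map. -/
noncomputable def JL : Hq q →L[ℝ] H :=
  LinearMap.mkContinuous
    { toFun := fun x => ((x.toDom : H))
      map_add' := fun _ _ => rfl
      map_smul' := fun _ _ => rfl }
    1 (fun x => by
      rw [one_mul]
      refine le_of_sq_le_sq (norm_nonneg _) (norm_nonneg _) ?_
      rw [hq_norm_sq]
      exact q.ge_one x.toDom)

variable {q}

@[simp] lemma JL_apply (x : Hq q) : JL q x = ((x.toDom : H)) := rfl

/-- The Riesz representer in `Hq q` of the functional `φ ↦ ⟪η, φ⟫`. -/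
noncomputable def riesz (η : H) : Hq q :=
  (InnerProductSpace.toDual ℝ (Hq q)).symm ((innerSL ℝ η).comp (JL q))

lemma riesz_spec (η : H) (φ : q.dom) :
    q.q (riesz (q := q) η).toDom φ = ⟪η, (φ : H)⟫ := by
  have h : (⟪(riesz (q := q) η), Hq.mk' φ⟫ : ℝ) = ⟪η, (φ : H)⟫ := by
    rw [riesz, InnerProductSpace.toDual_symm_apply]
    simp
  exact h

/-! ### The operator associated to a form -/

variable (q)

/-- The graph of the operator associated with `q`. -/
def graphQ : Submodule ℝ (H × H) where
  carrier := {p | ∃ h : p.1 ∈ q.dom, ∀ φ : q.dom, q.q φ ⟨p.1, h⟩ = ⟪(φ : H), p.2⟫}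
  add_mem' := by
    rintro ⟨a, b⟩ ⟨c, d⟩ ⟨ha, hab⟩ ⟨hc, hcd⟩
    refine ⟨Submodule.add_mem _ ha hc, fun φ => ?_⟩
    show q.q φ ((⟨a, ha⟩ : q.dom) + ⟨c, hc⟩) = ⟪(φ : H), b + d⟫
    rw [map_add, hab φ, hcd φ, inner_add_right]
  zero_mem' := by
    refine ⟨Submodule.zero_mem _, fun φ => ?_⟩
    show q.q φ (0 : q.dom) = ⟪(φ : H), (0 : H)⟫
    simp
  smul_mem' := by
    rintro r ⟨a, b⟩ ⟨ha, hab⟩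
    refine ⟨Submodule.smul_mem _ r ha, fun φ => ?_⟩
    show q.q φ (r • (⟨a, ha⟩ : q.dom)) = ⟪(φ : H), r • b⟫
    rw [map_smul, real_inner_smul_right, ← hab φ]
    simp

variable {q}

lemma graphQ_fst_eq_zero :
    ∀ x : H × H, x ∈ graphQ q → x.1 = 0 → x.2 = 0 := by
  rintro ⟨a, b⟩ ⟨ha, hab⟩ h0
  dsimp only at h0
  subst h0
  refine q.dense.eq_zero_of_inner_left ℝ (fun v hv => ?_)
  rw [real_inner_comm, ← hab ⟨v, hv⟩]
  show q.q ⟨v, hv⟩ (0 : q.dom) = 0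
  simp

variable (q)

/-- The operator associated with `q`. -/
noncomputable def opQ : H →ₗ.[ℝ] H := (graphQ q).toLinearPMap

lemma opQ_graph : (opQ q).graph = graphQ q :=
  Submodule.toLinearPMap_graph_eq _ graphQ_fst_eq_zero

lemma mem_opQ_iff (ψ η : H) :
    (∃ h : ψ ∈ (opQ q).domain, opQ q ⟨ψ, h⟩ = η) ↔
      ∃ hψ : ψ ∈ q.dom, ∀ φ : q.dom, q.q φ ⟨ψ, hψ⟩ = ⟪(φ : H), η⟫ := by
  rw [← pmap_graph_iff, opQ_graph]
  exact Iff.rfl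

variable {q}

lemma riesz_graph_mem (η : H) : (((riesz (q := q) η).toDom : H), η) ∈ graphQ q := by
  refine ⟨((riesz (q := q) η).toDom).2, fun φ => ?_⟩
  show q.q φ ((riesz (q := q) η).toDom) = ⟪(φ : H), η⟫
  rw [q.symm, riesz_spec, real_inner_comm]

lemma opQ_surjective (η : H) :
    ∃ ψ : (opQ q).domain, opQ q ψ = η := by
  have h := riesz_graph_mem (q := q) η
  rw [← opQ_graph, pmap_graph_iff] at h
  obtain ⟨hm, he⟩ := h
  exact ⟨⟨_, hm⟩, he⟩

lemma opQ_mem_graphQ (x : (opQ q).domain) : ((x : H), opQ q x) ∈ graphQ q := by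
  rw [← opQ_graph]
  exact LinearPMap.mem_graph _ x

lemma opQ_dense_domain : Dense (((opQ q).domain : Set H)) := by
  set D := (opQ q).domain
  set Dq : Submodule ℝ (Hq q) := D.comap ((JL q).toLinearMap) with hDq
  have hmem : ∀ η : H, riesz (q := q) η ∈ Dq := by
    intro η
    have h := riesz_graph_mem (q := q) η
    rw [← opQ_graph, pmap_graph_iff] at h
    exact h.1
  have hdq : Dense ((Dq : Set (Hq q))) := by
    rw [Submodule.dense_iff_topologicalClosure_eq_top,
      Submodule.topologicalClosure_eq_top_iff, Submodule.eq_bot_iff]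
    intro x hx
    have h1 : ∀ η : H, (⟪riesz (q := q) η, x⟫ : ℝ) = 0 :=
      fun η => (Submodule.mem_orthogonal _ _).mp hx _ (hmem η)
    have h2 : ∀ η : H, ⟪η, ((x.toDom : H))⟫ = 0 := by
      intro η
      rw [← riesz_spec (q := q) η x.toDom]
      exact h1 η
    have h3 : ((x.toDom : H)) = 0 := by
      have := h2 ((x.toDom : H))
      exact inner_self_eq_zero.mp this
    exact Hq.toDom_injective (by simpa using Subtype.ext h3)
  intro z
  have hz : z ∈ closure ((q.dom : Set H)) := q.dense z
  refine closure_minimal ?_ isClosed_closure hz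
  intro y hy
  have h4 : Hq.mk' ⟨y, hy⟩ ∈ closure ((Dq : Set (Hq q))) := hdq _
  have h5 : JL q (Hq.mk' ⟨y, hy⟩) ∈ closure ((JL q) '' (Dq : Set (Hq q))) :=
    map_mem_closure (JL q).continuous h4 (Set.mapsTo_image _ _)
  have h6 : (JL q) '' (Dq : Set (Hq q)) ⊆ (D : Set H) := by
    rintro _ ⟨w, hw, rfl⟩
    exact hw
  simpa using closure_mono h6 h5

lemma opQ_formal : (opQ q).IsFormalAdjoint (opQ q) := by
  intro x y
  obtain ⟨hx1, hx2⟩ := opQ_mem_graphQ (q := q) x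
  obtain ⟨hy1, hy2⟩ := opQ_mem_graphQ (q := q) y
  have e1 : q.q ⟨(y : H), hy1⟩ ⟨(x : H), hx1⟩ = ⟪(y : H), opQ q x⟫ := hx2 ⟨(y : H), hy1⟩
  have e2 : q.q ⟨(x : H), hx1⟩ ⟨(y : H), hy1⟩ = ⟪(x : H), opQ q y⟫ := hy2 ⟨(x : H), hx1⟩
  rw [real_inner_comm, ← e1, q.symm, e2]

lemma opQ_selfAdjoint : LinearPMap.adjoint (opQ q) = opQ q := by
  have hd : Dense (((opQ q).domain : Set H)) := opQ_dense_domain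
  refine le_antisymm (LinearPMap.le_of_le_graph ?_) (opQ_formal.le_adjoint hd)
  rintro ⟨a, b⟩ hab
  rw [pmap_graph_iff] at hab
  obtain ⟨ha, rfl⟩ := hab
  have formal := LinearPMap.adjoint_isFormalAdjoint hd
  set b := LinearPMap.adjoint (opQ q) ⟨a, ha⟩ with hb
  -- the element of the graph with second component b
  have hψ := riesz_graph_mem (q := q) b
  set ψ : H := ((riesz (q := q) b).toDom : H) with hψdef
  obtain ⟨hψ1, hψ2⟩ := hψ
  -- a = ψ
  have key : a = ψ := by
    apply ext_inner_right ℝ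
    intro ζ
    obtain ⟨z, hz⟩ := opQ_surjective (q := q) ζ
    obtain ⟨hz1, hz2⟩ := opQ_mem_graphQ (q := q) z
    -- ⟪a, ζ⟫ = ⟪b, z⟫
    have e1 : ⟪a, ζ⟫ = ⟪b, (z : H)⟫ := by
      rw [← hz]
      exact (formal ⟨a, ha⟩ z).symm ▸ (formal ⟨a, ha⟩ z)
    -- ⟪ψ, ζ⟫ = ⟪b, z⟫
    have e2 : ⟪ψ, ζ⟫ = ⟪b, (z : H)⟫ := by
      have f1 : q.q ⟨ψ, hψ1⟩ ⟨(z : H), hz1⟩ = ⟪ψ, opQ q z⟫ := hz2 ⟨ψ, hψ1⟩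
      have f2 : q.q ⟨(z : H), hz1⟩ ⟨ψ, hψ1⟩ = ⟪(z : H), b⟫ := hψ2 ⟨(z : H), hz1⟩
      rw [← hz, ← f1, q.symm, f2, real_inner_comm]
    rw [e1, e2]
  rw [opQ_graph]
  rw [key]
  exact ⟨hψ1, hψ2⟩

/-- The self-adjoint operator associated with a closed quadratic form. -/
noncomputable def opOf (q : ClosedQuadraticForm H) : SelfAdjointOpGeOne H where
  op := opQ q
  dense := opQ_dense_domain
  selfAdjoint := opQ_selfAdjoint
  ge_one := by
    intro x
    obtain ⟨hx1, hx2⟩ := opQ_mem_graphQ (q := q) x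
    have e := hx2 ⟨(x : H), hx1⟩
    rw [← e]
    exact q.ge_one ⟨(x : H), hx1⟩

lemma corr_opOf (q : ClosedQuadraticForm H) : Corr q (opOf q) := fun ψ η =>
  mem_opQ_iff q ψ η

lemma op_eq_of_corr {q : ClosedQuadraticForm H} {A₁ A₂ : SelfAdjointOpGeOne H}
    (h₁ : Corr q A₁) (h₂ : Corr q A₂) : A₁ = A₂ := by
  have hop : A₁.op = A₂.op := by
    apply LinearPMap.eq_of_eq_graph
    ext p
    obtain ⟨ψ, η⟩ := p
    rw [pmap_graph_iff, pmap_graph_iff, h₁ ψ η, h₂ ψ η]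
  obtain ⟨op₁, d₁, s₁, g₁⟩ := A₁
  obtain ⟨op₂, d₂, s₂, g₂⟩ := A₂
  dsimp only at hop
  subst hop
  rfl

lemma cqf_eq {q₁ q₂ : ClosedQuadraticForm H} (hdom : q₁.dom = q₂.dom)
    (hq : ∀ (x y : H) (hx₁ : x ∈ q₁.dom) (hy₁ : y ∈ q₁.dom) (hx₂ : x ∈ q₂.dom)
      (hy₂ : y ∈ q₂.dom), q₁.q ⟨x, hx₁⟩ ⟨y, hy₁⟩ = q₂.q ⟨x, hx₂⟩ ⟨y, hy₂⟩) : q₁ = q₂ := by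
  obtain ⟨d₁, e₁, f₁, s₁, g₁, c₁⟩ := q₁
  obtain ⟨d₂, e₂, f₂, s₂, g₂, c₂⟩ := q₂
  dsimp only at hdom hq
  subst hdom
  have : f₁ = f₂ := by
    apply LinearMap.ext
    intro x
    apply LinearMap.ext
    intro y
    exact hq x y x.2 y.2 x.2 y.2
  subst this
  rfl

/-! ### Uniqueness of the form -/

section Uniqueness

variable {A : SelfAdjointOpGeOne H}

/-- Given the correspondence, every `η` is in the range of `A`. -/
lemma corr_surj (hc : Corr q A) (η : H) :
    ∃ z : A.op.domain, A.op z = η := by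
  have h := (hc _ η).mpr (riesz_graph_mem (q := q) η)
  obtain ⟨hm, he⟩ := h
  exact ⟨⟨_, hm⟩, he⟩

/-- Given the correspondence, the domain of `A` sits inside `dom q` and
`q(φ, z) = ⟪φ, A z⟫` there. -/
lemma corr_dom_val (hc : Corr q A) (z : A.op.domain) :
    ∃ hz : (z : H) ∈ q.dom, ∀ φ : q.dom, q.q φ ⟨(z : H), hz⟩ = ⟪(φ : H), A.op z⟫ :=
  (hc (z : H) (A.op z)).mp ⟨z.2, rfl⟩

/-- `dom A` is dense in the form Hilbert space `Hq q`. -/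
lemma corr_dense_domA (hc : Corr q A) :
    Dense ((A.op.domain.comap ((JL q).toLinearMap) : Set (Hq q))) := by
  rw [Submodule.dense_iff_topologicalClosure_eq_top,
    Submodule.topologicalClosure_eq_top_iff, Submodule.eq_bot_iff]
  intro x hx
  have hmem : ∀ η : H, riesz (q := q) η ∈ A.op.domain.comap ((JL q).toLinearMap) := by
    intro η
    exact ((hc _ η).mpr (riesz_graph_mem (q := q) η)).1
  have h1 : ∀ η : H, (⟪riesz (q := q) η, x⟫ : ℝ) = 0 :=
    fun η => (Submodule.mem_orthogonal _ _).mp hx _ (hmem η)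
  have h2 : ∀ η : H, ⟪η, ((x.toDom : H))⟫ = 0 := by
    intro η
    rw [← riesz_spec (q := q) η x.toDom]
    exact h1 η
  have h3 : ((x.toDom : H)) = 0 := inner_self_eq_zero.mp (h2 _)
  exact Hq.toDom_injective (by simpa using Subtype.ext h3)

/-- On the domain of `A` the diagonal values of any corresponding form agree with
`⟪z, A z⟫`. -/
lemma corr_diag (hc : Corr q A) (z : A.op.domain) (hz : (z : H) ∈ q.dom) :
    q.q ⟨(z : H), hz⟩ ⟨(z : H), hz⟩ = ⟪(z : H), A.op z⟫ := by
  obtain ⟨hz', hval⟩ := corr_dom_val hc z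
  exact hval ⟨(z : H), hz⟩

variable {q₁ q₂ : ClosedQuadraticForm H}

/-- Key transfer lemma: if both `q₁` and `q₂` correspond to `A`, every element of
`dom q₁` is in `dom q₂`, with the same diagonal value. -/
lemma dom_le_and_val (h₁ : Corr q₁ A) (h₂ : Corr q₂ A) (x : q₁.dom) :
    ∃ hx : (x : H) ∈ q₂.dom, q₂.q ⟨(x : H), hx⟩ ⟨(x : H), hx⟩ = q₁.q x x := by
  -- approximate x by a sequence in dom A, in the norm of Hq q₁
  obtain ⟨u, hu_mem, hu_lim⟩ :=
    mem_closure_iff_seq_limit.mp (corr_dense_domA h₁ (Hq.mk' x))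
  -- the sequence viewed inside dom A
  set zA : ℕ → A.op.domain := fun n => ⟨JL q₁ (u n), hu_mem n⟩ with hzA
  -- membership of the sequence in dom q₂
  have hmem₂ : ∀ z : A.op.domain, (z : H) ∈ q₂.dom := fun z => (corr_dom_val h₂ z).1
  have hmem₁ : ∀ z : A.op.domain, (z : H) ∈ q₁.dom := fun z => (corr_dom_val h₁ z).1
  set w : ℕ → q₂.dom := fun n => ⟨(zA n : H), hmem₂ (zA n)⟩ with hw
  -- diagonal values agree on dom A
  have hdiag : ∀ z : A.op.domain, ∀ (hz1 : (z:H) ∈ q₁.dom) (hz2 : (z:H) ∈ q₂.dom),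
      q₂.q ⟨(z:H), hz2⟩ ⟨(z:H), hz2⟩ = q₁.q ⟨(z:H), hz1⟩ ⟨(z:H), hz1⟩ := by
    intro z hz1 hz2
    rw [corr_diag h₂ z hz2, corr_diag h₁ z hz1]
  -- u is Cauchy in Hq q₁
  have hu_cauchy : CauchySeq u := hu_lim.cauchySeq
  -- hence w is "q₂-Cauchy"
  have hw_cauchy : ∀ ε > (0:ℝ), ∃ N, ∀ m ≥ N, ∀ n ≥ N,
      q₂.q (w m - w n) (w m - w n) < ε := by
    intro ε hε
    rw [Metric.cauchySeq_iff] at hu_cauchy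
    obtain ⟨N, hN⟩ := hu_cauchy (Real.sqrt ε) (Real.sqrt_pos.mpr hε)
    refine ⟨N, fun m hm n hn => ?_⟩
    have h1 := hN m hm n hn
    rw [dist_eq_norm] at h1
    have h0 := norm_nonneg (u m - u n)
    have h2 : ‖u m - u n‖ ^ 2 < ε := by
      nlinarith [Real.sq_sqrt hε.le, Real.sqrt_nonneg ε]
    rw [hq_norm_sq] at h2
    have h3 : q₂.q (w m - w n) (w m - w n)
        = q₁.q ((u m).toDom - (u n).toDom) ((u m).toDom - (u n).toDom) := by
      have := hdiag (zA m - zA n) (hmem₁ _) (hmem₂ _)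
      exact this
    rw [h3]
    exact h2
  -- the limit in q₂
  obtain ⟨v, hv⟩ := q₂.closed' w hw_cauchy
  -- (w n : H) converges to (v : H)
  have hwv : Filter.Tendsto (fun n => ((w n : H))) Filter.atTop (nhds ((v : H))) := by
    rw [Metric.tendsto_atTop]
    intro ε hε
    obtain ⟨N, hN⟩ := hv (ε ^ 2) (by positivity)
    refine ⟨N, fun n hn => ?_⟩
    have h2 := hN n hn
    have h4 : ‖((w n : H)) - (v : H)‖ ^ 2 ≤ q₂.q (w n - v) (w n - v) := q₂.ge_one (w n - v)
    rw [dist_eq_norm]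
    nlinarith [norm_nonneg (((w n : H)) - (v : H))]
  -- (w n : H) also converges to (x : H)
  have hwx : Filter.Tendsto (fun n => ((w n : H))) Filter.atTop (nhds ((x : H))) := by
    have hcont : Filter.Tendsto (fun n => JL q₁ (u n)) Filter.atTop
        (nhds (JL q₁ (Hq.mk' x))) := ((JL q₁).continuous.tendsto _).comp hu_lim
    exact hcont
  have hvx : ((v : H)) = (x : H) := tendsto_nhds_unique hwv hwx
  have hx2 : (x : H) ∈ q₂.dom := hvx ▸ v.2
  refine ⟨hx2, ?_⟩
  -- norms converge in both Hq q₁ and Hq q₂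
  have hXv : (⟨(x : H), hx2⟩ : q₂.dom) = v := Subtype.ext hvx.symm
  -- convergence of w to v in Hq q₂
  have hWV : Filter.Tendsto (fun n => (Hq.mk' (w n) : Hq q₂)) Filter.atTop
      (nhds (Hq.mk' v)) := by
    rw [Metric.tendsto_atTop]
    intro ε hε
    obtain ⟨N, hN⟩ := hv (ε ^ 2) (by positivity)
    refine ⟨N, fun n hn => ?_⟩
    have h2 := hN n hn
    have h3 : dist (Hq.mk' (w n)) (Hq.mk' v) ^ 2 < ε ^ 2 := by
      rw [dist_eq_norm, hq_norm_sq]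
      simpa using h2
    nlinarith [dist_nonneg (x := Hq.mk' (w n)) (y := Hq.mk' v)]
  -- limit of norms
  have hlim₂ : Filter.Tendsto (fun n => q₂.q (w n) (w n)) Filter.atTop
      (nhds (q₂.q v v)) := by
    have hn2 : Filter.Tendsto (fun n => ‖(Hq.mk' (w n) : Hq q₂)‖ ^ 2) Filter.atTop
        (nhds (‖(Hq.mk' v : Hq q₂)‖ ^ 2)) := (hWV.norm.pow 2)
    simpa only [hq_norm_sq, Hq.toDom_mk'] using hn2
  have hlim₁ : Filter.Tendsto (fun n => q₁.q (u n).toDom (u n).toDom) Filter.atTop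
      (nhds (q₁.q x x)) := by
    have hn1 : Filter.Tendsto (fun n => ‖u n‖ ^ 2) Filter.atTop
        (nhds (‖(Hq.mk' x : Hq q₁)‖ ^ 2)) := (hu_lim.norm.pow 2)
    simpa only [hq_norm_sq, Hq.toDom_mk'] using hn1
  -- the two sequences agree
  have heq : ∀ n, q₂.q (w n) (w n) = q₁.q (u n).toDom (u n).toDom := by
    intro n
    exact hdiag (zA n) (hmem₁ _) (hmem₂ _)
  have : Filter.Tendsto (fun n => q₂.q (w n) (w n)) Filter.atTop (nhds (q₁.q x x)) := by
    simpa only [heq] using hlim₁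
  have hfinal : q₂.q v v = q₁.q x x := tendsto_nhds_unique hlim₂ this
  rw [hXv]
  exact hfinal

lemma form_eq_of_corr (h₁ : Corr q₁ A) (h₂ : Corr q₂ A) : q₁ = q₂ := by
  have hdom : q₁.dom = q₂.dom := by
    ext x
    constructor
    · intro hx
      exact (dom_le_and_val h₁ h₂ ⟨x, hx⟩).1
    · intro hx
      exact (dom_le_and_val h₂ h₁ ⟨x, hx⟩).1
  apply cqf_eq hdom
  intro x y hx₁ hy₁ hx₂ hy₂
  -- diagonal values agree
  have dval : ∀ (z : H) (hz₁ : z ∈ q₁.dom) (hz₂ : z ∈ q₂.dom),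
      q₂.q ⟨z, hz₂⟩ ⟨z, hz₂⟩ = q₁.q ⟨z, hz₁⟩ ⟨z, hz₁⟩ := by
    intro z hz₁ hz₂
    obtain ⟨hz', he⟩ := dom_le_and_val h₁ h₂ ⟨z, hz₁⟩
    exact he
  have dx := dval x hx₁ hx₂
  have dy := dval y hy₁ hy₂
  have dxy := dval (x + y) (Submodule.add_mem _ hx₁ hy₁) (Submodule.add_mem _ hx₂ hy₂)
  -- expand q(x+y,x+y)
  have e₁ : q₁.q ⟨x + y, Submodule.add_mem _ hx₁ hy₁⟩ ⟨x + y, Submodule.add_mem _ hx₁ hy₁⟩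
      = q₁.q ⟨x, hx₁⟩ ⟨x, hx₁⟩ + 2 * q₁.q ⟨x, hx₁⟩ ⟨y, hy₁⟩ + q₁.q ⟨y, hy₁⟩ ⟨y, hy₁⟩ := by
    have : (⟨x + y, Submodule.add_mem _ hx₁ hy₁⟩ : q₁.dom) = ⟨x, hx₁⟩ + ⟨y, hy₁⟩ := rfl
    rw [this]
    simp only [map_add, LinearMap.add_apply]
    rw [q₁.symm ⟨y, hy₁⟩ ⟨x, hx₁⟩]
    ring
  have e₂ : q₂.q ⟨x + y, Submodule.add_mem _ hx₂ hy₂⟩ ⟨x + y, Submodule.add_mem _ hx₂ hy₂⟩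
      = q₂.q ⟨x, hx₂⟩ ⟨x, hx₂⟩ + 2 * q₂.q ⟨x, hx₂⟩ ⟨y, hy₂⟩ + q₂.q ⟨y, hy₂⟩ ⟨y, hy₂⟩ := by
    have : (⟨x + y, Submodule.add_mem _ hx₂ hy₂⟩ : q₂.dom) = ⟨x, hx₂⟩ + ⟨y, hy₂⟩ := rfl
    rw [this]
    simp only [map_add, LinearMap.add_apply]
    rw [q₂.symm ⟨y, hy₂⟩ ⟨x, hx₂⟩]
    ring
  rw [e₁, e₂] at dxy
  linarith [dx, dy, dxy]

end Uniqueness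

/-! ### Construction of the form from an operator -/

section Existence

variable (A : SelfAdjointOpGeOne H)

lemma pmap_apply_congr {f g : H →ₗ.[ℝ] H} (h : f = g) {x : H} (hx : x ∈ f.domain) :
    f ⟨x, hx⟩ = g ⟨x, (congrArg LinearPMap.domain h) ▸ hx⟩ := by
  subst h; rfl

lemma opA_symm (x y : A.op.domain) : ⟪A.op x, (y : H)⟫ = ⟪(x : H), A.op y⟫ := by
  have formal := LinearPMap.adjoint_isFormalAdjoint A.dense (T := A.op)
  have hdom : (LinearPMap.adjoint A.op).domain = A.op.domain :=
    congrArg LinearPMap.domain A.selfAdjoint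
  have hx' : (x : H) ∈ (LinearPMap.adjoint A.op).domain := hdom.symm ▸ x.2
  have h1 := formal ⟨(x : H), hx'⟩ y
  have h2 : LinearPMap.adjoint A.op ⟨(x : H), hx'⟩ = A.op x := by
    rw [pmap_apply_congr A.selfAdjoint hx']
  rw [h2] at h1
  exact h1

lemma opA_norm_le (z : A.op.domain) : ‖(z : H)‖ ≤ ‖A.op z‖ := by
  rcases eq_or_lt_of_le (norm_nonneg ((z : H))) with h | h
  · rw [← h]; exact norm_nonneg _
  · have h1 := A.ge_one z
    have h2 := real_inner_le_norm ((z : H)) (A.op z)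
    nlinarith

lemma opA_injective (z w : A.op.domain) (h : A.op z = A.op w) : z = w := by
  have h1 : A.op (z - w) = 0 := by rw [LinearPMap.map_sub, h, sub_self]
  have h2 := opA_norm_le A (z - w)
  rw [h1, norm_zero] at h2
  have h3 : ((z : H)) - ((w : H)) = 0 := by
    have := le_antisymm h2 (norm_nonneg _)
    simpa [norm_eq_zero] using this
  exact Subtype.ext (sub_eq_zero.mp h3)

lemma opA_surjective (η : H) : ∃ z : A.op.domain, A.op z = η := by
  set R : Submodule ℝ H := LinearMap.range A.op.toFun with hR
  have hdr : Dense ((R : Set H)) := by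
    rw [Submodule.dense_iff_topologicalClosure_eq_top,
      Submodule.topologicalClosure_eq_top_iff, Submodule.eq_bot_iff]
    intro x hx
    have h1 : ∀ z : A.op.domain, ⟪(0 : H), (z : H)⟫ = ⟪x, A.op z⟫ := by
      intro z
      have h0 : ⟪A.op z, x⟫ = 0 :=
        (Submodule.mem_orthogonal _ _).mp hx (A.op z) ⟨z, rfl⟩
      rw [inner_zero_left, real_inner_comm]
      exact h0.symm
    have hxd : x ∈ (LinearPMap.adjoint A.op).domain :=
      LinearPMap.mem_adjoint_domain_of_exists _ ⟨0, h1⟩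
    have h2 : LinearPMap.adjoint A.op ⟨x, hxd⟩ = 0 :=
      LinearPMap.adjoint_apply_eq A.dense _ h1
    have hx' : x ∈ A.op.domain := (congrArg LinearPMap.domain A.selfAdjoint) ▸ hxd
    have h3 : A.op ⟨x, hx'⟩ = 0 := by
      rw [← pmap_apply_congr A.selfAdjoint hxd]
      exact h2
    have h4 := opA_norm_le A ⟨x, hx'⟩
    rw [h3, norm_zero] at h4
    simpa [norm_eq_zero] using le_antisymm h4 (norm_nonneg _)
  have hcl : IsClosed ((R : Set H)) := by
    apply IsSeqClosed.isClosed
    intro u y hu huy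
    choose z hz using fun n => hu n
    have hcau : CauchySeq (fun n => ((z n : H))) := by
      rw [Metric.cauchySeq_iff]
      intro ε hε
      have hucau := huy.cauchySeq
      rw [Metric.cauchySeq_iff] at hucau
      obtain ⟨N, hN⟩ := hucau ε hε
      refine ⟨N, fun m hm n hn => ?_⟩
      have h5 := hN m hm n hn
      rw [dist_eq_norm] at h5 ⊢
      have h6 : ((z m : H)) - ((z n : H)) = ((z m - z n : A.op.domain) : H) := rfl
      rw [h6]
      refine lt_of_le_of_lt (opA_norm_le A (z m - z n)) ?_
      rw [LinearPMap.map_sub]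
      show ‖A.op.toFun (z m) - A.op.toFun (z n)‖ < ε
      rw [hz m, hz n]
      exact h5
    obtain ⟨ψ, hψ⟩ := cauchySeq_tendsto_of_complete hcau
    have hkey : ∀ ξ : A.op.domain, ⟪y, (ξ : H)⟫ = ⟪ψ, A.op ξ⟫ := by
      intro ξ
      have t1 : Filter.Tendsto (fun n => (⟪u n, (ξ : H)⟫ : ℝ)) Filter.atTop
          (nhds ⟪y, (ξ : H)⟫) := huy.inner tendsto_const_nhds
      have t2 : Filter.Tendsto (fun n => (⟪((z n : H)), A.op ξ⟫ : ℝ)) Filter.atTop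
          (nhds ⟪ψ, A.op ξ⟫) := hψ.inner tendsto_const_nhds
      have t3 : ∀ n, (⟪u n, (ξ : H)⟫ : ℝ) = ⟪((z n : H)), A.op ξ⟫ := by
        intro n
        rw [← hz n]
        exact opA_symm A (z n) ξ
      rw [show (fun n => (⟪u n, (ξ : H)⟫ : ℝ)) = fun n => ⟪((z n : H)), A.op ξ⟫ from
        funext t3] at t1
      exact tendsto_nhds_unique t1 t2
    have hψd : ψ ∈ (LinearPMap.adjoint A.op).domain :=
      LinearPMap.mem_adjoint_domain_of_exists _ ⟨y, hkey⟩
    have h7 : LinearPMap.adjoint A.op ⟨ψ, hψd⟩ = y :=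
      LinearPMap.adjoint_apply_eq A.dense _ hkey
    have hψ' : ψ ∈ A.op.domain := (congrArg LinearPMap.domain A.selfAdjoint) ▸ hψd
    have h8 : A.op ⟨ψ, hψ'⟩ = y := by
      rw [← pmap_apply_congr A.selfAdjoint hψd]
      exact h7
    exact ⟨⟨ψ, hψ'⟩, h8⟩
  have huniv : (R : Set H) = Set.univ := by
    rw [← hcl.closure_eq]
    exact hdr.closure_eq
  have : η ∈ R := by rw [← SetLike.mem_coe, huniv]; trivial
  exact this

/-- The everywhere-defined inverse of `A`, as a function into the domain. -/
noncomputable def invA (η : H) : A.op.domain := (opA_surjective A η).choose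

lemma invA_spec (η : H) : A.op (invA A η) = η := (opA_surjective A η).choose_spec

/-- The bounded inverse `B = A⁻¹` as a continuous linear map. -/
noncomputable def BOp : H →L[ℝ] H :=
  LinearMap.mkContinuous
    { toFun := fun η => ((invA A η : H))
      map_add' := fun x y => by
        have h : invA A (x + y) = invA A x + invA A y := by
          apply opA_injective A
          rw [LinearPMap.map_add, invA_spec, invA_spec, invA_spec]
        show ((invA A (x + y) : H)) = ((invA A x : H)) + ((invA A y : H))
        rw [h]; rfl
      map_smul' := fun r x => by
        have h : invA A (r • x) = r • invA A x := by
          apply opA_injective A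
          rw [LinearPMap.map_smul, invA_spec, invA_spec]
        show ((invA A (r • x) : H)) = r • ((invA A x : H))
        rw [h]; rfl }
    1 (fun x => by
      rw [one_mul]
      have := opA_norm_le A (invA A x)
      rwa [invA_spec] at this)

lemma BOp_mem (x : H) : BOp A x ∈ A.op.domain := (invA A x).2

lemma BOp_eq_invA (x : H) : (⟨BOp A x, BOp_mem A x⟩ : A.op.domain) = invA A x :=
  Subtype.ext rfl

lemma BOp_apply_op (x : H) : A.op ⟨BOp A x, BOp_mem A x⟩ = x := by
  rw [BOp_eq_invA]; exact invA_spec A x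

lemma op_BOp (z : A.op.domain) : BOp A (A.op z) = ((z : H)) := by
  have : invA A (A.op z) = z := opA_injective A _ _ (invA_spec A _)
  show ((invA A (A.op z) : H)) = (z : H)
  rw [this]

lemma BOp_symm (x y : H) : ⟪BOp A x, y⟫ = ⟪x, BOp A y⟫ := by
  have h := opA_symm A ⟨BOp A x, BOp_mem A x⟩ ⟨BOp A y, BOp_mem A y⟩
  rw [BOp_apply_op, BOp_apply_op] at h
  exact h.symm

lemma BOp_inner_ge (x : H) : ‖BOp A x‖ ^ 2 ≤ ⟪x, BOp A x⟫ := by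
  have h := A.ge_one ⟨BOp A x, BOp_mem A x⟩
  rw [BOp_apply_op] at h
  rw [real_inner_comm] at h
  exact h

lemma BOp_norm_le (x : H) : ‖BOp A x‖ ≤ ‖x‖ := by
  have := opA_norm_le A (invA A x)
  rwa [invA_spec] at this

lemma BOp_inner_le (x : H) : ⟪x, BOp A x⟫ ≤ ‖x‖ ^ 2 := by
  have h1 := real_inner_le_norm x (BOp A x)
  have h2 := BOp_norm_le A x
  nlinarith [norm_nonneg x, norm_nonneg (BOp A x)]

lemma BOp_eq_zero {x : H} (h : BOp A x = 0) : x = 0 := by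
  have h1 := BOp_apply_op A x
  have h2 : (⟨BOp A x, BOp_mem A x⟩ : A.op.domain) = 0 := Subtype.ext h
  rw [h2, LinearPMap.map_zero] at h1
  exact h1.symm

lemma BOp_inner_pos {x : H} (h : (⟪x, BOp A x⟫ : ℝ) = 0) : x = 0 := by
  have h1 := BOp_inner_ge A x
  rw [h] at h1
  have h2 : ‖BOp A x‖ = 0 := by nlinarith [norm_nonneg (BOp A x)]
  exact BOp_eq_zero A (norm_eq_zero.mp h2)

end Existence

section FormConstruction

variable (A : SelfAdjointOpGeOne H)

/-- Type synonym: `H` with the inner product `⟪x, A⁻¹ y⟫`. -/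
def Wb (A : SelfAdjointOpGeOne H) : Type _ := H

instance : AddCommGroup (Wb A) := inferInstanceAs (AddCommGroup H)
instance : Module ℝ (Wb A) := inferInstanceAs (Module ℝ H)

/-- `H → Wb A`, the identity. -/
def Wb.ofH (x : H) : Wb A := x

/-- `Wb A → H`, the identity. -/
def Wb.toH (x : Wb A) : H := x

@[simp] lemma Wb.toH_ofH (x : H) : (Wb.ofH A x).toH = x := rfl
@[simp] lemma Wb.toH_add (x y : Wb A) : (x + y).toH = x.toH + y.toH := rfl
@[simp] lemma Wb.toH_smul (r : ℝ) (x : Wb A) : (r • x).toH = r • x.toH := rfl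
@[simp] lemma Wb.toH_zero : (0 : Wb A).toH = 0 := rfl

lemma Wb.toH_injective : Function.Injective (Wb.toH A) := fun _ _ h => h

noncomputable def wbCore : InnerProductSpace.Core ℝ (Wb A) where
  inner x y := ⟪x.toH, BOp A y.toH⟫
  conj_inner_symm x y := by
    show (⟪y.toH, BOp A x.toH⟫ : ℝ) = ⟪x.toH, BOp A y.toH⟫
    rw [← BOp_symm, real_inner_comm]
  re_inner_nonneg x := by
    have h1 := BOp_inner_ge A x.toH
    have h2 := sq_nonneg ‖BOp A x.toH‖
    show (0:ℝ) ≤ ⟪x.toH, BOp A x.toH⟫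
    linarith
  add_left x y z := by
    show (⟪x.toH + y.toH, BOp A z.toH⟫ : ℝ) = _
    rw [inner_add_left]
  smul_left x y r := by
    show (⟪r • x.toH, BOp A y.toH⟫ : ℝ) = _
    rw [real_inner_smul_left]
    simp
  definite x h := by
    have : x.toH = 0 := BOp_inner_pos A h
    exact Wb.toH_injective A (by simpa using this)

noncomputable instance : NormedAddCommGroup (Wb A) := (wbCore A).toNormedAddCommGroup
noncomputable instance : InnerProductSpace ℝ (Wb A) := InnerProductSpace.ofCore _

@[simp] lemma wb_inner_def (x y : Wb A) : ⟪x, y⟫ = ⟪x.toH, BOp A y.toH⟫ := rfl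

/-- The completion of `H` in the `A⁻¹`-inner product. -/
@[reducible] def KA := UniformSpace.Completion (Wb A)

/-- `H → Wb A` as a continuous linear map. -/
noncomputable def ofWbL : H →L[ℝ] Wb A :=
  LinearMap.mkContinuous
    { toFun := Wb.ofH A
      map_add' := fun _ _ => rfl
      map_smul' := fun _ _ => rfl }
    1 (fun x => by
      rw [one_mul]
      refine le_of_sq_le_sq (norm_nonneg _) (norm_nonneg _) ?_
      show ‖Wb.ofH A x‖ ^ 2 ≤ ‖x‖ ^ 2
      have h : ‖Wb.ofH A x‖ ^ 2 = (⟪Wb.ofH A x, Wb.ofH A x⟫ : ℝ) :=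
        (real_inner_self_eq_norm_sq _).symm
      rw [h]
      simp only [wb_inner_def, Wb.toH_ofH]
      exact BOp_inner_le A x)

@[simp] lemma ofWbL_apply (x : H) : ofWbL A x = Wb.ofH A x := rfl

/-- The map `i : H → K`. -/
noncomputable def iK : H →L[ℝ] KA A :=
  (UniformSpace.Completion.toComplL).comp (ofWbL A)

lemma iK_apply (x : H) : iK A x = ((Wb.ofH A x : Wb A) : KA A) := rfl

lemma inner_iK (x y : H) : (⟪iK A x, iK A y⟫ : ℝ) = ⟪x, BOp A y⟫ := by
  rw [iK_apply, iK_apply, UniformSpace.Completion.inner_coe]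
  simp

lemma denseRange_iK : DenseRange (iK A) := by
  have h1 : Set.range (iK A) = Set.range ((↑) : Wb A → KA A) := by
    ext ξ
    constructor
    · rintro ⟨x, rfl⟩
      exact ⟨Wb.ofH A x, rfl⟩
    · rintro ⟨w, rfl⟩
      exact ⟨w.toH, rfl⟩
  show Dense (Set.range (iK A))
  rw [h1]
  exact UniformSpace.Completion.denseRange_coe

/-- The map `J = i* : K → H`. -/
noncomputable def JK : KA A →L[ℝ] H := ContinuousLinearMap.adjoint (iK A)

lemma JK_inner (ξ : KA A) (y : H) : ⟪JK A ξ, y⟫ = ⟪ξ, iK A y⟫ :=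
  ContinuousLinearMap.adjoint_inner_left (iK A) y ξ

lemma JK_iK (x : H) : JK A (iK A x) = BOp A x := by
  apply ext_inner_right ℝ
  intro y
  rw [JK_inner, inner_iK]
  exact (BOp_symm A x y).symm

lemma JK_injective : Function.Injective (JK A) := by
  intro ξ₁ ξ₂ h
  have h0 : JK A (ξ₁ - ξ₂) = 0 := by rw [map_sub, h, sub_self]
  have h1 : ∀ y : H, (⟪ξ₁ - ξ₂, iK A y⟫ : ℝ) = 0 := by
    intro y
    rw [← JK_inner, h0, inner_zero_left]
  have h2 : ξ₁ - ξ₂ = 0 := by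
    have h3 : ∀ v : KA A, v ∈ Set.range (iK A) → (⟪ξ₁ - ξ₂, v⟫ : ℝ) = 0 := by
      rintro v ⟨y, rfl⟩
      exact h1 y
    have h4 : ((⟪ξ₁ - ξ₂, ·⟫) : KA A → ℝ) = (fun _ => (0:ℝ)) := by
      apply Continuous.ext_on (denseRange_iK A)
      · exact (continuous_const.inner continuous_id)
      · exact continuous_const
      · rintro v ⟨y, rfl⟩
        exact h1 y
    have h5 := congrFun h4 (ξ₁ - ξ₂)
    exact inner_self_eq_zero.mp h5
  exact sub_eq_zero.mp h2

lemma ofWbL_norm_apply_le (x : H) : ‖ofWbL A x‖ ≤ ‖x‖ := by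
  refine le_of_sq_le_sq (norm_nonneg _) (norm_nonneg _) ?_
  show ‖Wb.ofH A x‖ ^ 2 ≤ ‖x‖ ^ 2
  have h : ‖Wb.ofH A x‖ ^ 2 = (⟪Wb.ofH A x, Wb.ofH A x⟫ : ℝ) :=
    (real_inner_self_eq_norm_sq _).symm
  rw [h]
  simp only [wb_inner_def, Wb.toH_ofH]
  exact BOp_inner_le A x

lemma iK_norm_apply_le (x : H) : ‖iK A x‖ ≤ ‖x‖ := by
  rw [iK_apply, UniformSpace.Completion.norm_coe]
  exact ofWbL_norm_apply_le A x

lemma JK_norm_le (ξ : KA A) : ‖JK A ξ‖ ≤ ‖ξ‖ := by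
  have h1 : ‖iK A‖ ≤ 1 :=
    ContinuousLinearMap.opNorm_le_bound _ zero_le_one
      (fun x => by rw [one_mul]; exact iK_norm_apply_le A x)
  have h2 : ‖JK A‖ = ‖iK A‖ := by
    show ‖ContinuousLinearMap.adjoint (iK A)‖ = ‖iK A‖
    exact LinearIsometryEquiv.norm_map _ _
  calc ‖JK A ξ‖ ≤ ‖JK A‖ * ‖ξ‖ := (JK A).le_opNorm ξ
    _ ≤ 1 * ‖ξ‖ := mul_le_mul_of_nonneg_right (h2 ▸ h1) (norm_nonneg ξ)
    _ = ‖ξ‖ := one_mul _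

/-- The domain of the form constructed from `A`: the range of `J`. -/
noncomputable def domK : Submodule ℝ H := LinearMap.range ((JK A).toLinearMap)

lemma domK_dense : Dense ((domK A : Set H)) := by
  rw [Submodule.dense_iff_topologicalClosure_eq_top,
    Submodule.topologicalClosure_eq_top_iff, Submodule.eq_bot_iff]
  intro x hx
  have h1 : ∀ ξ : KA A, (⟪JK A ξ, x⟫ : ℝ) = 0 :=
    fun ξ => (Submodule.mem_orthogonal _ _).mp hx (JK A ξ) ⟨ξ, rfl⟩
  have h2 : (⟪BOp A x, x⟫ : ℝ) = 0 := by
    rw [← JK_iK]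
    exact h1 (iK A x)
  have h3 : (⟪x, BOp A x⟫ : ℝ) = 0 := by rw [real_inner_comm]; exact h2
  exact BOp_inner_pos A h3

/-- The linear equivalence `K ≃ range J`. -/
noncomputable def eK : KA A ≃ₗ[ℝ] domK A :=
  LinearEquiv.ofInjective ((JK A).toLinearMap) (JK_injective A)

lemma eK_apply_coe (ξ : KA A) : ((eK A ξ : H)) = JK A ξ := rfl

lemma eK_symm_coe (x : domK A) : JK A ((eK A).symm x) = (x : H) :=
  congrArg Subtype.val ((eK A).apply_symm_apply x)

lemma eK_symm_eq {ξ : KA A} {x : domK A} (h : (x : H) = JK A ξ) : (eK A).symm x = ξ := by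
  apply (eK A).injective
  apply Subtype.ext
  show ((eK A ((eK A).symm x) : H)) = ((eK A ξ : H))
  rw [(eK A).apply_symm_apply]
  rw [h]
  rfl

/-- The closed quadratic form constructed from `A`. -/
noncomputable def formOf : ClosedQuadraticForm H where
  dom := domK A
  dense := domK_dense A
  q := LinearMap.mk₂ ℝ (fun x y => (⟪(eK A).symm x, (eK A).symm y⟫ : ℝ))
    (fun x x' y => by
      show (⟪(eK A).symm (x + x'), (eK A).symm y⟫ : ℝ) = _
      rw [map_add, inner_add_left])
    (fun r x y => by
      show (⟪(eK A).symm (r • x), (eK A).symm y⟫ : ℝ) = _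
      rw [map_smul, real_inner_smul_left]
      rfl)
    (fun x y y' => by
      show (⟪(eK A).symm x, (eK A).symm (y + y')⟫ : ℝ) = _
      rw [map_add, inner_add_right])
    (fun r x y => by
      show (⟪(eK A).symm x, (eK A).symm (r • y)⟫ : ℝ) = _
      rw [map_smul, real_inner_smul_right]
      rfl)
  symm φ ψ := by
    show (⟪(eK A).symm φ, (eK A).symm ψ⟫ : ℝ) = ⟪(eK A).symm ψ, (eK A).symm φ⟫
    exact real_inner_comm _ _
  ge_one φ := by
    show ‖(φ : H)‖ ^ 2 ≤ (⟪(eK A).symm φ, (eK A).symm φ⟫ : ℝ)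
    rw [real_inner_self_eq_norm_sq]
    have h1 : ‖(φ : H)‖ ≤ ‖(eK A).symm φ‖ := by
      rw [← eK_symm_coe A φ]
      exact JK_norm_le A _
    nlinarith [norm_nonneg ((φ : H)), norm_nonneg ((eK A).symm φ)]
  closed' := by
    intro u hu
    have hcau : CauchySeq (fun n => (eK A).symm (u n)) := by
      rw [Metric.cauchySeq_iff]
      intro ε hε
      obtain ⟨N, hN⟩ := hu (ε ^ 2) (by positivity)
      refine ⟨N, fun m hm n hn => ?_⟩
      have h2 : (⟪(eK A).symm (u m - u n), (eK A).symm (u m - u n)⟫ : ℝ) < ε ^ 2 :=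
        hN m hm n hn
      rw [map_sub, real_inner_self_eq_norm_sq] at h2
      rw [dist_eq_norm]
      nlinarith [norm_nonneg ((eK A).symm (u m) - (eK A).symm (u n))]
    obtain ⟨ζ, hζ⟩ := cauchySeq_tendsto_of_complete hcau
    refine ⟨eK A ζ, ?_⟩
    intro ε hε
    rw [Metric.tendsto_atTop] at hζ
    obtain ⟨N, hN⟩ := hζ (Real.sqrt ε) (Real.sqrt_pos.mpr hε)
    refine ⟨N, fun n hn => ?_⟩
    have h3 := hN n hn
    rw [dist_eq_norm] at h3
    show (⟪(eK A).symm (u n - eK A ζ), (eK A).symm (u n - eK A ζ)⟫ : ℝ) < ε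
    rw [map_sub, (eK A).symm_apply_apply, real_inner_self_eq_norm_sq]
    have h0 := norm_nonneg ((eK A).symm (u n) - ζ)
    nlinarith [Real.sq_sqrt hε.le, Real.sqrt_nonneg ε]

lemma formOf_q_apply (x y : (formOf A).dom) :
    (formOf A).q x y = (⟪(eK A).symm x, (eK A).symm y⟫ : ℝ) := rfl

/-- The constructed form corresponds to `A`. -/
lemma corr_formOf : Corr (formOf A) A := by
  intro ψ η
  constructor
  · rintro ⟨hm, rfl⟩
    have hψB : ψ = BOp A (A.op ⟨ψ, hm⟩) := (op_BOp A ⟨ψ, hm⟩).symm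
    have hmem : ψ ∈ domK A := by
      rw [hψB, ← JK_iK]
      exact ⟨iK A (A.op ⟨ψ, hm⟩), rfl⟩
    refine ⟨hmem, fun φ => ?_⟩
    have hsymm : (eK A).symm ⟨ψ, hmem⟩ = iK A (A.op ⟨ψ, hm⟩) := by
      apply eK_symm_eq
      show ψ = JK A (iK A (A.op ⟨ψ, hm⟩))
      rw [JK_iK]
      exact hψB
    show (⟪(eK A).symm φ, (eK A).symm ⟨ψ, hmem⟩⟫ : ℝ) = ⟪(φ : H), A.op ⟨ψ, hm⟩⟫
    rw [hsymm]
    have hadj : (⟪(eK A).symm φ, iK A (A.op ⟨ψ, hm⟩)⟫ : ℝ)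
        = ⟪JK A ((eK A).symm φ), A.op ⟨ψ, hm⟩⟫ := (JK_inner A _ _).symm
    rw [hadj]
    exact congrArg (fun v => (⟪v, A.op ⟨ψ, hm⟩⟫ : ℝ)) (eK_symm_coe A φ)
  · rintro ⟨hψ, hval⟩
    set ξ : KA A := (eK A).symm ⟨ψ, hψ⟩ with hξdef
    have hkey : ∀ ζ : KA A, (⟪ζ, ξ⟫ : ℝ) = ⟪ζ, iK A η⟫ := by
      intro ζ
      have hζmem : JK A ζ ∈ domK A := ⟨ζ, rfl⟩
      have h1 := hval ⟨JK A ζ, hζmem⟩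
      have h2 : (eK A).symm ⟨JK A ζ, hζmem⟩ = ζ := eK_symm_eq A rfl
      rw [show (formOf A).q ⟨JK A ζ, hζmem⟩ ⟨ψ, hψ⟩
          = (⟪(eK A).symm ⟨JK A ζ, hζmem⟩, ξ⟫ : ℝ) from rfl, h2] at h1
      rw [h1]
      exact JK_inner A ζ η
    have hξη : ξ = iK A η := ext_inner_left ℝ hkey
    have hψval : ψ = BOp A η := by
      have hc : JK A ξ = ψ := eK_symm_coe A ⟨ψ, hψ⟩
      rw [← hc, hξη, JK_iK]
    have hmem : ψ ∈ A.op.domain := hψval ▸ BOp_mem A η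
    refine ⟨hmem, ?_⟩
    have hsub : (⟨ψ, hmem⟩ : A.op.domain) = ⟨BOp A η, BOp_mem A η⟩ := Subtype.ext hψval
    rw [hsub, BOp_apply_op]

end FormConstruction

/-- The bijective correspondence. -/
noncomputable def Phi : ClosedQuadraticForm H ≃ SelfAdjointOpGeOne H where
  toFun := opOf
  invFun := formOf
  left_inv q := form_eq_of_corr (corr_formOf (opOf q)) (corr_opOf q)
  right_inv A := op_eq_of_corr (corr_opOf (formOf A)) (corr_formOf A)

end Kato

/-- **Corollary 3.7 of the paper (Kato's representation theorem).** There is a bijective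
correspondence between densely defined closed quadratic forms `q ≥ 1` on a Hilbert space
`H` and self-adjoint operators `A ≥ 1` on `H`. The correspondence (in one direction
`A = (JJ*)⁻¹` for the inclusion `J : dom q → H`; in the other, `q(φ,ψ) = ⟨A^{1/2}φ,
A^{1/2}ψ⟩` on `dom A^{1/2}`) is characterized by: `ψ ∈ dom A` with `Aψ = η` iff
`ψ ∈ dom q` and `q(φ, ψ) = ⟨φ, η⟩` for all `φ ∈ dom q`. -/
theorem closedForm_selfAdjointOp_correspondence
    (H : Type*) [NormedAddCommGroup H] [InnerProductSpace ℝ H] [CompleteSpace H] :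
    ∃ Φ : ClosedQuadraticForm H ≃ SelfAdjointOpGeOne H,
      ∀ (q : ClosedQuadraticForm H) (ψ η : H),
        (∃ h : ψ ∈ (Φ q).op.domain, (Φ q).op ⟨ψ, h⟩ = η) ↔
        (∃ hψ : ψ ∈ q.dom, ∀ φ : q.dom, q.q φ ⟨ψ, hψ⟩ = ⟪(φ : H), η⟫) :=
  ⟨Kato.Phi, fun q ψ η => Kato.corr_opOf q ψ η⟩
end

section
/- Let H₁ and H₂ be Hilbert spaces with a common subspace D dense in H₁. If there exists a self-adjoint operator Λ on H₁ with D ⊆ dom Λ and ⟨φ, Λφ⟩_{H₁} = ‖φ‖_{H₂}² for all φ ∈ D, then D* := {h ∈ H₂ : ∃ C, |⟨φ, h⟩_{H₂}| ≤ C‖φ‖_{H₁} ∀φ ∈ D} is dense in H₂. -/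
set_option maxHeartbeats 1000000
set_option synthInstance.maxHeartbeats 400000


open scoped RealInnerProductSpace

/-- **Theorem 4.1 of the paper (converse direction).** Let `H₁`, `H₂` be Hilbert spaces
with a common linear subspace `D ⊆ H₁ ∩ H₂` (modelled by injective linear maps
`i₁ : D → H₁`, `i₂ : D → H₂`) which is dense in `H₁`. If there exists a self-adjoint
operator `Λ` on `H₁` with `D ⊆ dom Λ` and `⟨φ, Λφ⟩_{H₁} = ‖φ‖_{H₂}²` for all `φ ∈ D`,
then `D* := {h ∈ H₂ : ∃ C, |⟨φ, h⟩_{H₂}| ≤ C ‖φ‖_{H₁} ∀ φ ∈ D}` is dense in `H₂`. -/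
theorem unbounded_containment_converse
    {H₁ H₂ D : Type*}
    [NormedAddCommGroup H₁] [InnerProductSpace ℝ H₁] [CompleteSpace H₁]
    [NormedAddCommGroup H₂] [InnerProductSpace ℝ H₂] [CompleteSpace H₂]
    [AddCommGroup D] [Module ℝ D]
    (i₁ : D →ₗ[ℝ] H₁) (i₂ : D →ₗ[ℝ] H₂)
    (hi₁ : Function.Injective i₁) (hi₂ : Function.Injective i₂)
    (hdense₁ : Dense (Set.range i₁))
    (Λ : H₁ →ₗ.[ℝ] H₁) (hΛ : Λ.adjoint = Λ)
    (hdom : ∀ φ : D, i₁ φ ∈ Λ.domain)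
    (hid : ∀ φ : D, ⟪i₁ φ, Λ ⟨i₁ φ, hdom φ⟩⟫ = ‖i₂ φ‖ ^ 2) :
    Dense {h : H₂ | ∃ C : ℝ, ∀ φ : D, |⟪i₂ φ, h⟫| ≤ C * ‖i₁ φ‖} := by
  -- the domain of Λ is dense
  have hΛdense : Dense (Λ.domain : Set H₁) := by
    refine hdense₁.mono ?_
    rintro _ ⟨φ, rfl⟩
    exact hdom φ
  -- Λ is symmetric
  have hsymm : ∀ x y : Λ.domain, ⟪Λ x, (y : H₁)⟫ = ⟪(x : H₁), Λ y⟫ := by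
    have h := LinearPMap.adjoint_isFormalAdjoint hΛdense
    rw [hΛ] at h
    exact h
  -- the bilinear form
  set b : D → D → ℝ := fun φ ψ => ⟪i₁ φ, Λ ⟨i₁ ψ, hdom ψ⟩⟫ with hb
  have hbsymm : ∀ φ ψ : D, b φ ψ = b ψ φ := by
    intro φ ψ
    have := hsymm ⟨i₁ ψ, hdom ψ⟩ ⟨i₁ φ, hdom φ⟩
    simp only [hb]
    rw [← this, real_inner_comm]
  -- polarization: the H₂ inner product on D is given by b
  have hpol : ∀ φ ψ : D, ⟪i₂ φ, i₂ ψ⟫ = b φ ψ := by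
    intro φ ψ
    have hadd : (⟨i₁ (φ + ψ), hdom (φ + ψ)⟩ : Λ.domain)
        = ⟨i₁ φ, hdom φ⟩ + ⟨i₁ ψ, hdom ψ⟩ := by
      apply Subtype.ext
      simp [map_add]
    have hdiag : ∀ χ : D, b χ χ = ‖i₂ χ‖ ^ 2 := fun χ => hid χ
    have hΛadd : Λ ⟨i₁ (φ + ψ), hdom (φ + ψ)⟩
        = Λ ⟨i₁ φ, hdom φ⟩ + Λ ⟨i₁ ψ, hdom ψ⟩ := by
      rw [hadd]; exact Λ.map_add _ _
    have hexp : b (φ + ψ) (φ + ψ) = b φ φ + b φ ψ + b ψ φ + b ψ ψ := by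
      simp only [hb]
      rw [hΛadd, map_add, inner_add_left, inner_add_right, inner_add_right]
      ring
    have h2 : ‖i₂ (φ + ψ)‖ ^ 2 = ‖i₂ φ‖ ^ 2 + 2 * ⟪i₂ φ, i₂ ψ⟫ + ‖i₂ ψ‖ ^ 2 := by
      rw [map_add]
      exact norm_add_sq_real _ _
    have := hdiag (φ + ψ)
    rw [hexp, h2, hdiag φ, hdiag ψ, hbsymm ψ φ] at this
    linarith
  -- the subspace D*
  set S : Submodule ℝ H₂ :=
    { carrier := {h : H₂ | ∃ C : ℝ, ∀ φ : D, |⟪i₂ φ, h⟫| ≤ C * ‖i₁ φ‖}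
      add_mem' := by
        rintro a c ⟨Ca, ha⟩ ⟨Cc, hc⟩
        refine ⟨Ca + Cc, fun φ => ?_⟩
        rw [inner_add_right]
        calc |⟪i₂ φ, a⟫ + ⟪i₂ φ, c⟫| ≤ |⟪i₂ φ, a⟫| + |⟪i₂ φ, c⟫| := abs_add_le _ _
          _ ≤ Ca * ‖i₁ φ‖ + Cc * ‖i₁ φ‖ := add_le_add (ha φ) (hc φ)
          _ = (Ca + Cc) * ‖i₁ φ‖ := by ring
      zero_mem' := ⟨0, fun φ => by simp⟩
      smul_mem' := by
        rintro c a ⟨Ca, ha⟩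
        refine ⟨|c| * Ca, fun φ => ?_⟩
        rw [inner_smul_right, abs_mul, mul_assoc]
        exact mul_le_mul_of_nonneg_left (ha φ) (abs_nonneg c) } with hS
  -- it suffices to show S is dense
  show Dense (S : Set H₂)
  rw [Submodule.dense_iff_topologicalClosure_eq_top,
    Submodule.topologicalClosure_eq_top_iff]
  rw [Submodule.eq_bot_iff]
  intro k hk
  rw [Submodule.mem_orthogonal] at hk
  -- the graph of the "identity" D ⊆ H₁ → H₂ inside the L² product
  set E := WithLp 2 (H₁ × H₂)
  set e : E ≃L[ℝ] H₁ × H₂ := WithLp.prodContinuousLinearEquiv 2 ℝ H₁ H₂ with he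
  set j : D →ₗ[ℝ] E := e.symm.toLinearEquiv.toLinearMap ∘ₗ (i₁.prod i₂) with hj
  set G : Submodule ℝ E := LinearMap.range j with hG
  have hj_eq : ∀ φ : D, e (j φ) = (i₁ φ, i₂ φ) := fun φ =>
    e.apply_symm_apply (i₁ φ, i₂ φ)
  have hj_fst : ∀ φ : D, (e (j φ)).1 = i₁ φ := fun φ =>
    congrArg Prod.fst (hj_eq φ)
  have hj_snd : ∀ φ : D, (e (j φ)).2 = i₂ φ := fun φ =>
    congrArg Prod.snd (hj_eq φ)
  -- the point (0, k) lies in the double orthogonal of G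
  set z : E := e.symm (0, k) with hz
  have hzG : z ∈ Gᗮᗮ := by
    rw [Submodule.mem_orthogonal]
    intro w hw
    rw [Submodule.mem_orthogonal] at hw
    -- w.2 belongs to S
    have hwS : (e w).2 ∈ S := by
      refine ⟨‖(e w).1‖, fun φ => ?_⟩
      have h0 := hw (j φ) (LinearMap.mem_range_self j φ)
      rw [WithLp.prod_inner_apply] at h0
      have hfst : (WithLp.ofLp (j φ)).1 = i₁ φ := hj_fst φ
      have hsnd : (WithLp.ofLp (j φ)).2 = i₂ φ := hj_snd φ
      have h1 : ⟪i₁ φ, (e w).1⟫ + ⟪i₂ φ, (e w).2⟫ = 0 := by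
        rw [← hfst, ← hsnd]; exact h0
      have h2 : ⟪i₂ φ, (e w).2⟫ = -⟪i₁ φ, (e w).1⟫ := by linarith
      rw [h2, abs_neg]
      calc |⟪i₁ φ, (e w).1⟫| ≤ ‖i₁ φ‖ * ‖(e w).1‖ := abs_real_inner_le_norm _ _
        _ = ‖(e w).1‖ * ‖i₁ φ‖ := mul_comm _ _
    have := hk _ hwS
    rw [WithLp.prod_inner_apply]
    have hz1 : (WithLp.ofLp z).1 = (0 : H₁) := rfl
    have hz2 : (WithLp.ofLp z).2 = k := rfl
    rw [hz1, hz2, inner_zero_right, zero_add]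
    exact this
  rw [Submodule.orthogonal_orthogonal_eq_closure] at hzG
  have hzcl : z ∈ closure (G : Set E) := hzG
  rw [mem_closure_iff_seq_limit] at hzcl
  obtain ⟨g, hgG, hgz⟩ := hzcl
  choose φn hφn using fun n => hgG n
  -- componentwise convergence
  have hconv : Filter.Tendsto (fun n => e (g n)) Filter.atTop (nhds (0, k)) := by
    have := (e.continuous.tendsto z).comp hgz
    simpa [hz, Function.comp_def] using this
  have hconv1 : Filter.Tendsto (fun n => i₁ (φn n)) Filter.atTop (nhds (0 : H₁)) := by
    have := (continuous_fst.tendsto ((0 : H₁), k)).comp hconv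
    refine this.congr fun n => ?_
    simp only [Function.comp_apply]
    rw [← hφn n]
    exact (hj_fst (φn n))
  have hconv2 : Filter.Tendsto (fun n => i₂ (φn n)) Filter.atTop (nhds k) := by
    have := (continuous_snd.tendsto ((0 : H₁), k)).comp hconv
    refine this.congr fun n => ?_
    simp only [Function.comp_apply]
    rw [← hφn n]
    exact (hj_snd (φn n))
  -- k is orthogonal to every i₂ ψ
  have hkψ : ∀ ψ : D, ⟪k, i₂ ψ⟫ = 0 := by
    intro ψ
    have t1 : Filter.Tendsto (fun n => ⟪i₂ (φn n), i₂ ψ⟫) Filter.atTop (nhds ⟪k, i₂ ψ⟫) :=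
      (continuous_inner.tendsto (k, i₂ ψ)).comp (hconv2.prodMk_nhds tendsto_const_nhds)
    have t2 : Filter.Tendsto (fun n => ⟪i₂ (φn n), i₂ ψ⟫) Filter.atTop (nhds 0) := by
      have t3 : Filter.Tendsto (fun n => ⟪i₁ (φn n), Λ ⟨i₁ ψ, hdom ψ⟩⟫) Filter.atTop
          (nhds ⟪(0 : H₁), Λ ⟨i₁ ψ, hdom ψ⟩⟫) :=
        (continuous_inner.tendsto ((0 : H₁), Λ ⟨i₁ ψ, hdom ψ⟩)).comp
          (hconv1.prodMk_nhds tendsto_const_nhds)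
      rw [inner_zero_left] at t3
      exact t3.congr fun n => (hpol (φn n) ψ).symm
    exact tendsto_nhds_unique t1 t2
  -- conclude k = 0
  have hkk : ⟪k, k⟫ = 0 := by
    have t1 : Filter.Tendsto (fun n => ⟪i₂ (φn n), k⟫) Filter.atTop (nhds ⟪k, k⟫) :=
      (continuous_inner.tendsto (k, k)).comp (hconv2.prodMk_nhds tendsto_const_nhds)
    have t2 : Filter.Tendsto (fun n => ⟪i₂ (φn n), k⟫) Filter.atTop (nhds 0) := by
      have : ∀ n, ⟪i₂ (φn n), k⟫ = 0 := fun n => by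
        rw [real_inner_comm]; exact hkψ (φn n)
      simp [this]
    exact tendsto_nhds_unique t1 t2
  exact inner_self_eq_zero.mp hkk
end

section
/- On a connected locally finite resistance network (G,c), for every vertex x and every function u of finite energy, ⟨δ_x, u⟩_ℰ = Δu(x), where δ_x is the Dirac mass at x (viewed in the energy space) and Δ is the network Laplacian. -/
/-- The energy form of a network `(G, c)`:
`ℰ(u, v) = (1/2) ∑_{x,y} c x y * (u x - u y) * (v x - v y)`. -/
noncomputable def energyForm {V : Type*} (c : V → V → ℝ) (u v : V → ℝ) : ℝ :=
  (1 / 2) * ∑' p : V × V, c p.1 p.2 * (u p.1 - u p.2) * (v p.1 - v p.2)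

/-- A function `u` has finite energy iff the defining sum of `ℰ(u,u)` is (absolutely)
summable. -/
def FiniteEnergy {V : Type*} (c : V → V → ℝ) (u : V → ℝ) : Prop :=
  Summable fun p : V × V => c p.1 p.2 * (u p.1 - u p.2) ^ 2

/-- The network Laplacian `(Δu)(x) = ∑_{y ∼ x} c x y * (u x - u y)`. -/
noncomputable def netLap {V : Type*} (c : V → V → ℝ) (u : V → ℝ) : V → ℝ :=
  fun x => ∑' y, c x y * (u x - u y)

/-- The Dirac mass at a vertex. -/
def dirac {V : Type*} [DecidableEq V] (x : V) : V → ℝ :=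
  fun z => if z = x then 1 else 0

/-- **Lemma 5.15 of the paper.** On a connected, locally finite resistance network `(G, c)`,
for every vertex `x` and every function `u` of finite energy,
`⟨δ_x, u⟩_ℰ = (Δu)(x)`. -/
theorem energyForm_dirac_eq_lap
    {V : Type*} [DecidableEq V] (c : V → V → ℝ)
    (hsymm : ∀ x y, c x y = c y x)
    (hnonneg : ∀ x y, 0 ≤ c x y)
    (hdiag : ∀ x, c x x = 0)
    (hlocfin : ∀ x, (Function.support (c x)).Finite)
    (hconn : ∀ x y, Relation.ReflTransGen (fun a b => 0 < c a b) x y)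
    (u : V → ℝ) (hu : FiniteEnergy c u) (x : V) :
    energyForm c (dirac x) u = netLap c u x := by
  classical
  set F := (hlocfin x).toFinset with hF
  have hmemF : ∀ y, y ∈ F ↔ c x y ≠ 0 := by
    intro y; simp [hF, Function.mem_support]
  have hxF : x ∉ F := by simp [hmemF, hdiag x]
  have hyne : ∀ y ∈ F, y ≠ x := by
    intro y hy h; exact hxF (h ▸ hy)
  set f : V × V → ℝ := fun p => c p.1 p.2 * (dirac x p.1 - dirac x p.2) * (u p.1 - u p.2)
    with hf
  have hsupp : ∀ p ∉ ({x} ×ˢ F ∪ F ×ˢ {x} : Finset (V × V)), f p = 0 := by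
    rintro ⟨a, b⟩ hp
    simp only [Finset.mem_union, Finset.mem_product, Finset.mem_singleton, not_or,
      not_and_or] at hp
    obtain ⟨h1, h2⟩ := hp
    by_cases hax : a = x
    · have hb : b ∉ F := h1.resolve_left (by simp [hax])
      have : c a b = 0 := by
        rw [hax]; by_contra h; exact hb ((hmemF b).2 h)
      simp [hf, this]
    · by_cases hbx : b = x
      · have ha : a ∉ F := h2.resolve_right (by simp [hbx])
        have : c a b = 0 := by
          rw [hbx, hsymm]; by_contra h; exact ha ((hmemF a).2 h)
        simp [hf, this]
      · simp [hf, dirac, hax, hbx]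
  have hdisj : Disjoint ({x} ×ˢ F) (F ×ˢ {x} : Finset (V × V)) := by
    rw [Finset.disjoint_left]
    rintro ⟨a, b⟩ ha hb
    simp only [Finset.mem_product, Finset.mem_singleton] at ha hb
    exact hxF (ha.1 ▸ hb.1)
  have hsum1 : ∑ p ∈ ({x} ×ˢ F : Finset (V × V)), f p
      = ∑ y ∈ F, c x y * (u x - u y) := by
    rw [Finset.sum_product, Finset.sum_singleton]
    refine Finset.sum_congr rfl fun y hy => ?_
    simp [hf, dirac, hyne y hy]
  have hsum2 : ∑ p ∈ (F ×ˢ {x} : Finset (V × V)), f p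
      = ∑ y ∈ F, c x y * (u x - u y) := by
    rw [Finset.sum_product, Finset.sum_comm]
    rw [Finset.sum_singleton]
    refine Finset.sum_congr rfl fun y hy => ?_
    simp only [hf, dirac]
    rw [if_neg (hyne y hy), if_pos trivial, hsymm y x]
    ring
  have hlap : netLap c u x = ∑ y ∈ F, c x y * (u x - u y) := by
    unfold netLap
    refine tsum_eq_sum fun y hy => ?_
    have : c x y = 0 := by by_contra h; exact hy ((hmemF y).2 h)
    simp [this]
  unfold energyForm
  rw [show (fun p : V × V => c p.1 p.2 * (dirac x p.1 - dirac x p.2) * (u p.1 - u p.2)) = f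
    from rfl]
  rw [tsum_eq_sum hsupp, Finset.sum_union hdisj, hsum1, hsum2, hlap]
  ring
end

section
/- Let (G,c) be a transient resistance network with monopoles {w_x}. The operator Δ defined on span{w_x} by the pointwise Laplacian is nonnegative on the energy space: for ξ = Σ_{x∈F} ξ_x w_x with F finite, ⟨ξ, Δξ⟩_ℰ = Σ_{x∈F} |ξ_x|² ≥ 0. Consequently Δ is a Hermitian, nonnegative, closable operator on H_ℰ. -/
/-- **Lemma 5.23 of the paper.** Let `(G, c)` be a transient resistance network with
monopoles `{w_x}`. The Laplacian, defined on `span{w_x}` by the pointwise formula, is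
nonnegative on the energy space: for `ξ = ∑_{x ∈ F} ξ_x w_x` with `F` finite,
`⟨ξ, Δξ⟩_ℰ = ∑_{x ∈ F} |ξ_x|² ≥ 0`. (Consequently `Δ` is a Hermitian, nonnegative,
closable operator on `H_ℰ`.) -/
theorem lap_nonneg_on_monopoles
    {V : Type*} [DecidableEq V] (c : V → V → ℝ)
    (hsymm : ∀ x y, c x y = c y x)
    (hnonneg : ∀ x y, 0 ≤ c x y)
    (hdiag : ∀ x, c x x = 0)
    (hlocfin : ∀ x, (Function.support (c x)).Finite)
    (hconn : ∀ x y, Relation.ReflTransGen (fun a b => 0 < c a b) x y)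
    (w : V → V → ℝ)
    (hw_energy : ∀ x, FiniteEnergy c (w x))
    (hw_mono : ∀ x z, netLap c (w x) z = dirac x z)
    (F : Finset V) (ξ : V → ℝ) :
    energyForm c (fun z => ∑ x ∈ F, ξ x * w x z)
        (netLap c (fun z => ∑ x ∈ F, ξ x * w x z)) = ∑ x ∈ F, (ξ x) ^ 2 ∧
      (0:ℝ) ≤ ∑ x ∈ F, (ξ x) ^ 2 := by

  classical
  set u : V → ℝ := fun z => ∑ x ∈ F, ξ x * w x z with hu
  -- Step 1: pointwise Laplacian of u
  have hsumm : ∀ z (g : V → ℝ), Summable (fun y => c z y * g y) := by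
    intro z g
    apply summable_of_ne_finset_zero (s := (hlocfin z).toFinset)
    intro y hy
    have : c z y = 0 := by
      by_contra h
      exact hy ((hlocfin z).mem_toFinset.mpr h)
    simp [this]
  have hnet : ∀ z, netLap c u z = ∑ x ∈ F, ξ x * dirac x z := by
    intro z
    have h1 : (fun y => c z y * (u z - u y))
        = fun y => ∑ x ∈ F, ξ x * (c z y * (w x z - w x y)) := by
      funext y
      simp only [hu]
      rw [← Finset.sum_sub_distrib, Finset.mul_sum]
      congr 1; funext x; ring
    rw [netLap, h1, Summable.tsum_finsetSum]
    · refine Finset.sum_congr rfl fun x _ => ?_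
      rw [tsum_mul_left]
      have := hw_mono x z
      rw [netLap] at this
      rw [this]
    · intro x _
      have : (fun y => ξ x * (c z y * (w x z - w x y)))
          = fun y => c z y * (ξ x * (w x z - w x y)) := by
        funext y; ring
      rw [this]
      exact hsumm z _
  set v : V → ℝ := netLap c u with hv
  have hvF : ∀ x ∈ F, v x = ξ x := by
    intro x hx
    rw [hnet]
    rw [Finset.sum_eq_single x]
    · simp [dirac]
    · intro b _ hb; simp [dirac, (Ne.symm hb)]
    · intro h; exact absurd hx h
  have hv0 : ∀ x, x ∉ F → v x = 0 := by
    intro x hx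
    rw [hnet]
    apply Finset.sum_eq_zero
    intro b hb
    have : x ≠ b := fun h => hx (h ▸ hb)
    simp [dirac, this]
  -- the finite set carrying the energy sum
  set K : Finset V := F ∪ F.biUnion (fun x => (hlocfin x).toFinset) with hK
  have hFK : F ⊆ K := Finset.subset_union_left
  have hcK : ∀ x ∈ F, ∀ y, c x y ≠ 0 → y ∈ K := by
    intro x hx y hcy
    exact Finset.mem_union_right _ (Finset.mem_biUnion.mpr
      ⟨x, hx, (hlocfin x).mem_toFinset.mpr hcy⟩)
  have hg0 : ∀ p : V × V, p ∉ K ×ˢ K →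
      c p.1 p.2 * (u p.1 - u p.2) * (v p.1 - v p.2) = 0 := by
    rintro ⟨a, b⟩ hp
    by_cases hc : c a b = 0
    · simp [hc]
    by_cases ha : a ∈ F
    · exact absurd (Finset.mem_product.mpr ⟨hFK ha, hcK a ha b hc⟩) hp
    by_cases hb : b ∈ F
    · have hc' : c b a ≠ 0 := by rw [hsymm]; exact hc
      exact absurd (Finset.mem_product.mpr ⟨hcK b hb a hc', hFK hb⟩) hp
    · simp [hv0 a ha, hv0 b hb]
  have htsum : (∑' p : V × V, c p.1 p.2 * (u p.1 - u p.2) * (v p.1 - v p.2))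
      = ∑ p ∈ K ×ˢ K, c p.1 p.2 * (u p.1 - u p.2) * (v p.1 - v p.2) :=
    tsum_eq_sum hg0
  -- summation by parts over the finite set
  have hsplit : (∑ p ∈ K ×ˢ K, c p.1 p.2 * (u p.1 - u p.2) * (v p.1 - v p.2))
      = 2 * ∑ x ∈ K, v x * ∑ y ∈ K, c x y * (u x - u y) := by
    rw [Finset.sum_product]
    have hB : (∑ x ∈ K, ∑ y ∈ K, c x y * (u x - u y) * v y)
        = - ∑ x ∈ K, ∑ y ∈ K, c x y * (u x - u y) * v x := by
      rw [Finset.sum_comm, ← Finset.sum_neg_distrib]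
      refine Finset.sum_congr rfl fun x _ => ?_
      rw [← Finset.sum_neg_distrib]
      refine Finset.sum_congr rfl fun y _ => ?_
      rw [hsymm y x]; ring
    have : (∑ x ∈ K, ∑ y ∈ K, c x y * (u x - u y) * (v x - v y))
        = (∑ x ∈ K, ∑ y ∈ K, c x y * (u x - u y) * v x)
          - (∑ x ∈ K, ∑ y ∈ K, c x y * (u x - u y) * v y) := by
      rw [← Finset.sum_sub_distrib]
      refine Finset.sum_congr rfl fun x _ => ?_
      rw [← Finset.sum_sub_distrib]
      refine Finset.sum_congr rfl fun y _ => ?_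
      ring
    rw [this, hB, sub_neg_eq_add, ← two_mul]
    congr 1
    refine Finset.sum_congr rfl fun x _ => ?_
    rw [Finset.mul_sum]
    refine Finset.sum_congr rfl fun y _ => ?_
    ring
  have hinner : ∀ x ∈ F, (∑ y ∈ K, c x y * (u x - u y)) = ξ x := by
    intro x hx
    have h1 : (∑ y ∈ K, c x y * (u x - u y)) = netLap c u x := by
      rw [netLap]
      refine (tsum_eq_sum ?_).symm
      intro y hy
      have : c x y = 0 := by
        by_contra h
        exact hy (hcK x hx y h)
      simp [this]
    rw [h1, ← hv]
    exact hvF x hx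
  have hmain : (∑ x ∈ K, v x * ∑ y ∈ K, c x y * (u x - u y)) = ∑ x ∈ F, (ξ x) ^ 2 := by
    rw [← Finset.sum_subset hFK (fun x _ hx => by rw [hv0 x hx, zero_mul])]
    refine Finset.sum_congr rfl fun x hx => ?_
    rw [hvF x hx, hinner x hx]; ring
  constructor
  · rw [energyForm, htsum, hsplit, hmain]; ring
  · exact Finset.sum_nonneg fun x _ => sq_nonneg _
end

section
/- On a resistance network (G,c) with energy kernel {v_x} (v_x ∈ H_ℰ with ⟨v_x, u⟩_ℰ = u(x) − u(o) for all u ∈ H_ℰ), define K: span{δ_x} ⊆ ℓ²(G) → H_ℰ by Kδ_x = δ_x, and L: span{v_x} ⊆ H_ℰ → ℓ²(G) by Lv_x = δ_x − δ_o. Then ⟨Kφ, ψ⟩_ℰ = ⟨φ, Lψ⟩_{ℓ²} for all φ ∈ span{δ_x}, ψ ∈ span{v_x}; i.e., (K,L) is a symmetric pair, and hence both K and L are closable. -/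
lemma mixed_summable {V : Type*} (c : V → V → ℝ) (hnonneg : ∀ x y, 0 ≤ c x y)
    {u w : V → ℝ} (hu : FiniteEnergy c u) (hw : FiniteEnergy c w) :
    Summable fun p : V × V => c p.1 p.2 * (u p.1 - u p.2) * (w p.1 - w p.2) := by
  have hg : Summable (fun p : V × V => (1/2) * (c p.1 p.2 * (u p.1 - u p.2)^2)
      + (1/2) * (c p.1 p.2 * (w p.1 - w p.2)^2)) :=
    (hu.mul_left _).add (hw.mul_left _)
  have hbound : ∀ p : V × V,
      |c p.1 p.2 * (u p.1 - u p.2) * (w p.1 - w p.2)|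
        ≤ (1/2) * (c p.1 p.2 * (u p.1 - u p.2)^2)
          + (1/2) * (c p.1 p.2 * (w p.1 - w p.2)^2) := by
    intro p
    have h1 : |c p.1 p.2 * (u p.1 - u p.2) * (w p.1 - w p.2)|
        = c p.1 p.2 * |(u p.1 - u p.2) * (w p.1 - w p.2)| := by
      rw [mul_assoc, abs_mul, abs_of_nonneg (hnonneg _ _)]
    rw [h1]
    have h2 : |(u p.1 - u p.2) * (w p.1 - w p.2)|
        ≤ (1/2) * ((u p.1 - u p.2)^2 + (w p.1 - w p.2)^2) := by
      rw [abs_mul]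
      nlinarith [sq_nonneg (|u p.1 - u p.2| - |w p.1 - w p.2|),
        sq_abs (u p.1 - u p.2), sq_abs (w p.1 - w p.2),
        abs_nonneg (u p.1 - u p.2), abs_nonneg (w p.1 - w p.2)]
    nlinarith [hnonneg p.1 p.2, mul_le_mul_of_nonneg_left h2 (hnonneg p.1 p.2)]
  exact Summable.of_abs (Summable.of_nonneg_of_le (fun p => abs_nonneg _) hbound hg)

lemma energyForm_comm {V : Type*} (c : V → V → ℝ) (u w : V → ℝ) :
    energyForm c u w = energyForm c w u := by
  unfold energyForm
  congr 1
  exact tsum_congr fun p => by ring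

lemma energyForm_sum {V : Type*} (c : V → V → ℝ) (hnonneg : ∀ x y, 0 ≤ c x y)
    (u : V → ℝ) (hu : FiniteEnergy c u) (s : Finset V) (a : V → ℝ) (v : V → V → ℝ)
    (hv : ∀ x, FiniteEnergy c (v x)) :
    energyForm c u (fun z => ∑ x ∈ s, a x * v x z)
      = ∑ x ∈ s, a x * energyForm c u (v x) := by
  unfold energyForm
  have key : ∀ p : V × V,
      c p.1 p.2 * (u p.1 - u p.2) * ((∑ x ∈ s, a x * v x p.1) - ∑ x ∈ s, a x * v x p.2)
      = ∑ x ∈ s, a x * (c p.1 p.2 * (u p.1 - u p.2) * (v x p.1 - v x p.2)) := by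
    intro p
    rw [← Finset.sum_sub_distrib, Finset.mul_sum]
    exact Finset.sum_congr rfl fun x _ => by ring
  rw [tsum_congr key, Summable.tsum_finsetSum (fun x _ => (mixed_summable c hnonneg hu (hv x)).mul_left _),
    Finset.mul_sum]
  exact Finset.sum_congr rfl fun x _ => by rw [tsum_mul_left]; ring

lemma fe_finsupp {V : Type*} [DecidableEq V] (c : V → V → ℝ)
    (hsymm : ∀ x y, c x y = c y x) (hlocfin : ∀ x, (Function.support (c x)).Finite)
    (φ : V →₀ ℝ) : FiniteEnergy c (fun z => φ z) := by
  have hfin : (Function.support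
      (fun p : V × V => c p.1 p.2 * (φ p.1 - φ p.2) ^ 2)).Finite := by
    apply Set.Finite.subset (Set.Finite.union
      (Set.Finite.biUnion φ.support.finite_toSet
        (fun x _ => (Set.finite_singleton x).prod (hlocfin x)))
      (Set.Finite.biUnion φ.support.finite_toSet
        (fun x _ => (hlocfin x).prod (Set.finite_singleton x))))
    intro p hp
    simp only [Function.mem_support] at hp
    have hc : c p.1 p.2 ≠ 0 := fun h => hp (by rw [h]; ring)
    have hφ : φ p.1 ≠ φ p.2 := fun h => hp (by rw [h]; ring)
    by_cases h1 : p.1 ∈ φ.support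
    · exact Or.inl (Set.mem_biUnion (by simpa using h1) ⟨rfl, hc⟩)
    · have h2 : p.2 ∈ φ.support := by
        simp only [Finsupp.mem_support_iff] at h1 ⊢
        intro h; push_neg at h1; exact hφ (by rw [h1, h])
      refine Or.inr (Set.mem_biUnion (by simpa using h2) ?_)
      exact ⟨by simpa [Function.mem_support, hsymm p.2 p.1] using hc, rfl⟩
  apply summable_of_ne_finset_zero (s := hfin.toFinset)
  intro p hp
  by_contra h
  exact hp (hfin.mem_toFinset.mpr h)

/-- **Theorem 5.24 of the paper.** On a resistance network `(G, c)` with fixed origin `o`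
and energy kernel `{v_x}` (`v_x ∈ H_ℰ` with `⟨v_x, u⟩_ℰ = u(x) − u(o)` for all finite
energy `u`), define `K : span{δ_x} ⊆ ℓ²(G) → H_ℰ` by `Kδ_x = δ_x` and
`L : span{v_x} ⊆ H_ℰ → ℓ²(G)` by `Lv_x = δ_x − δ_o`. Then
`⟨Kφ, ψ⟩_ℰ = ⟨φ, Lψ⟩_{ℓ²}` for all `φ ∈ span{δ_x}` (finitely supported functions) and
`ψ = ∑_{x} a_x v_x ∈ span{v_x}`; i.e. `(K, L)` is a symmetric pair, and hence both `K`
and `L` are closable. -/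
theorem K_L_symmetric_pair
    {V : Type*} [DecidableEq V] (c : V → V → ℝ)
    (hsymm : ∀ x y, c x y = c y x)
    (hnonneg : ∀ x y, 0 ≤ c x y)
    (hdiag : ∀ x, c x x = 0)
    (hlocfin : ∀ x, (Function.support (c x)).Finite)
    (hconn : ∀ x y, Relation.ReflTransGen (fun a b => 0 < c a b) x y)
    (o : V) (v : V → V → ℝ)
    (hv_energy : ∀ x, FiniteEnergy c (v x))
    (hv_repr : ∀ (x : V) (u : V → ℝ), FiniteEnergy c u →
      energyForm c (v x) u = u x - u o)
    (φ : V →₀ ℝ) (a : V →₀ ℝ) :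
    energyForm c (fun z => φ z) (fun z => ∑ x ∈ a.support, a x * v x z) =
      ∑' z, φ z * (∑ x ∈ a.support, a x * (dirac x z - dirac o z)) := by
  have hφE : FiniteEnergy c (fun z => φ z) := fe_finsupp c hsymm hlocfin φ
  have lhs : energyForm c (fun z => φ z) (fun z => ∑ x ∈ a.support, a x * v x z)
      = ∑ x ∈ a.support, a x * (φ x - φ o) := by
    rw [energyForm_sum c hnonneg _ hφE a.support a v hv_energy]
    exact Finset.sum_congr rfl fun x _ => by
      rw [energyForm_comm, hv_repr x _ hφE]
  rw [lhs]
  have key : ∀ z, φ z * (∑ x ∈ a.support, a x * (dirac x z - dirac o z))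
      = ∑ x ∈ a.support, a x * (φ z * dirac x z - φ z * dirac o z) := by
    intro z; rw [Finset.mul_sum]; exact Finset.sum_congr rfl fun x _ => by ring
  rw [tsum_congr key]
  have hsum : ∀ x : V, Summable (fun z => φ z * dirac x z) := by
    intro x
    apply summable_of_ne_finset_zero (s := {x})
    intro z hz
    simp only [Finset.mem_singleton] at hz
    simp [dirac, hz]
  rw [Summable.tsum_finsetSum (fun x _ => ((hsum x).sub (hsum o)).mul_left _)]
  refine Finset.sum_congr rfl fun x _ => ?_
  rw [tsum_mul_left, Summable.tsum_sub (hsum x) (hsum o),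
    tsum_eq_single x (fun z hz => by simp [dirac, hz]),
    tsum_eq_single o (fun z hz => by simp [dirac, hz])]
  simp [dirac]
end
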